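/- arXiv:2506.17979 — 4 statements merged into one kernel-verified Lean document; each statement's English description precedes it below -/
import Mathlib

section
/- Let (E, ρ) be a metric space, m a Borel measure on E that is finite on compact sets, N a measurable kernel from E to E, and J a Borel measure on E × E that is symmetric (invariant under the flip (x,y) ↦ (y,x)) and satisfies J(A) ≤ D₂ ∫_E N(x, A_x) dm(x) for every Borel A ⊆ E × E and some D₂ > 0, where A_x = {y : (x,y) ∈ A}. Assume there exist β > 0 and M_β < ∞ such that ∫_E min(1, ρ(x,y)^{β}) dN(x)(y) ≤ M_β for m-almost every x ∈ E. Let p ∈ [2, ∞) and u ∈ L^p(E; m). Then for all open sets U, V ⊆ E such that the closure of U is compact and contained in V, one has ∫_{U × (E∖V)} |u(x) − u(y)|² dJ(x,y) < ∞. -/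
open MeasureTheory ENNReal

/-!
The compact set `closure U` lies at positive distance `δ` from `Vᶜ`, so by Markov's inequality
the moment bound gives `N(x, Vᶜ) ≤ Mβ / min(1, δ^β)` for a.e. `x ∈ U`, and likewise for `N(x, U)`
with `x ∈ Vᶜ`. The domination `J ≤ D₂ ∫ N(x, ·) dm` says that `J` restricted to `A × B`, pushed
to the first coordinate, is at most `D₂ N(·, B) m|_A`; hence
`∫_{A×B} h(x) dJ ≤ D₂ ∫_A h N(·, B) dm`. Bounding `(a - b)² ≤ 4 + 2|a|^p + 2|b|^p` and using the
symmetry of `J` to move `|u(y)|^p` to the first coordinate, the integral is controlled by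
`J(U × Vᶜ) ≲ m(U) < ∞` and `‖u‖_p^p`. Both marginals of `J` are absolutely continuous with
respect to `m`, so `u` may be replaced by a measurable representative.
-/

lemma sq_le_one_add_abs_rpow {p : ℝ} (hp : 2 ≤ p) (t : ℝ) : t ^ 2 ≤ 1 + |t| ^ p := by
  rcases le_total |t| 1 with ht | ht
  · nlinarith [sq_abs t, abs_nonneg t, Real.rpow_nonneg (abs_nonneg t) p]
  · have h := Real.rpow_le_rpow_of_exponent_le ht hp
    rw [Real.rpow_two, sq_abs] at h
    linarith

lemma ofReal_sq_sub_le {p : ℝ} (hp : 2 ≤ p) (a b : ℝ) :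
    ENNReal.ofReal ((a - b) ^ 2) ≤ 4 + 2 * ‖a‖ₑ ^ p + 2 * ‖b‖ₑ ^ p := by
  have hp0 : 0 ≤ p := by linarith
  have hreal : (a - b) ^ 2 ≤ 4 + 2 * |a| ^ p + 2 * |b| ^ p := by
    nlinarith [sq_le_one_add_abs_rpow hp a, sq_le_one_add_abs_rpow hp b, sq_nonneg (a + b)]
  have henorm (t : ℝ) : ‖t‖ₑ ^ p = ENNReal.ofReal (|t| ^ p) := by
    rw [← Real.norm_eq_abs, ← ENNReal.ofReal_rpow_of_nonneg (norm_nonneg t) hp0, ofReal_norm]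
  refine (ENNReal.ofReal_le_ofReal hreal).trans_eq ?_
  have ha := Real.rpow_nonneg (abs_nonneg a) p
  have hb := Real.rpow_nonneg (abs_nonneg b) p
  rw [henorm, henorm, ENNReal.ofReal_add (by positivity) (by positivity),
    ENNReal.ofReal_add (by positivity) (by positivity), ENNReal.ofReal_mul (by norm_num),
    ENNReal.ofReal_mul (by norm_num)]
  norm_num

lemma IsCompact.exists_pos_forall_le_dist_compl {E : Type*} [PseudoMetricSpace E]
    {K V : Set E} (hK : IsCompact K) (hV : IsOpen V) (hKV : K ⊆ V) :
    ∃ δ > 0, ∀ x ∈ K, ∀ y ∈ Vᶜ, δ ≤ dist x y := by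
  obtain ⟨δ, hδ, hthick⟩ := hK.exists_thickening_subset_open hV hKV
  exact ⟨δ, hδ, fun x hx y hy => not_lt.1 fun hxy =>
    hy (hthick (Metric.mem_thickening_iff.2 ⟨x, hx, by rwa [dist_comm]⟩))⟩

section SeparatedSets

variable {E : Type*} [PseudoMetricSpace E] [MeasurableSpace E] [OpensMeasurableSpace E]

lemma measure_le_div_of_le_dist {ν : Measure E} {x : E} {β δ : ℝ} (hβ : 0 ≤ β) (hδ : 0 < δ)
    {M : ℝ≥0∞} (hM : ∫⁻ y, ENNReal.ofReal (min 1 (dist x y ^ β)) ∂ν ≤ M)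
    {B : Set E} (hB : ∀ y ∈ B, δ ≤ dist x y) :
    ν B ≤ M / ENNReal.ofReal (min 1 (δ ^ β)) := by
  have hpos : ENNReal.ofReal (min 1 (δ ^ β)) ≠ 0 :=
    ENNReal.ofReal_pos.2 (lt_min one_pos (Real.rpow_pos_of_pos hδ β)) |>.ne'
  calc ν B ≤ ν {y | ENNReal.ofReal (min 1 (δ ^ β)) ≤ ENNReal.ofReal (min 1 (dist x y ^ β))} :=
        measure_mono fun y hy => ENNReal.ofReal_le_ofReal
          (min_le_min le_rfl (Real.rpow_le_rpow hδ.le (hB y hy) hβ))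
    _ ≤ (∫⁻ y, ENNReal.ofReal (min 1 (dist x y ^ β)) ∂ν) / ENNReal.ofReal (min 1 (δ ^ β)) :=
        meas_ge_le_lintegral_div (by fun_prop) hpos ENNReal.ofReal_ne_top
    _ ≤ M / ENNReal.ofReal (min 1 (δ ^ β)) := ENNReal.div_le_div_right hM _

lemma ae_measure_le_div_of_le_dist {m : Measure E} {N : E → Measure E} {β δ : ℝ}
    (hβ : 0 ≤ β) (hδ : 0 < δ) {M : ℝ≥0∞}
    (hM : ∀ᵐ x ∂m, ∫⁻ y, ENNReal.ofReal (min 1 (dist x y ^ β)) ∂(N x) ≤ M)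
    {A B : Set E} (hAB : ∀ x ∈ A, ∀ y ∈ B, δ ≤ dist x y) :
    ∀ᵐ x ∂m, x ∈ A → N x B ≤ M / ENNReal.ofReal (min 1 (δ ^ β)) :=
  hM.mono fun x hx hxA => measure_le_div_of_le_dist hβ hδ hx (hAB x hxA)

end SeparatedSets

section KernelDomination

variable {E : Type*} [MeasurableSpace E] {m : Measure E} {N : E → Measure E}
  {J : Measure (E × E)} {c : ℝ≥0∞}

lemma map_fst_restrict_prod_le
    (hJ : ∀ S : Set (E × E), MeasurableSet S → J S ≤ c * ∫⁻ x, N x (Prod.mk x ⁻¹' S) ∂m)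
    {A B : Set E} (hA : MeasurableSet A) (hB : MeasurableSet B) :
    (J.restrict (A ×ˢ B)).map Prod.fst ≤ c • (m.restrict A).withDensity (fun x => N x B) := by
  refine Measure.le_iff.2 fun S hS => ?_
  calc ((J.restrict (A ×ˢ B)).map Prod.fst) S = J ((S ∩ A) ×ˢ B) := by
        rw [Measure.map_apply measurable_fst hS, Measure.restrict_apply (measurable_fst hS),
          ← Set.prod_univ, Set.prod_inter_prod, Set.univ_inter]
    _ ≤ c * ∫⁻ x, N x (Prod.mk x ⁻¹' ((S ∩ A) ×ˢ B)) ∂m := hJ _ ((hS.inter hA).prod hB)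
    _ = c * ∫⁻ x in S ∩ A, N x B ∂m := by
        rw [← lintegral_indicator (hS.inter hA)]
        congr 2 with x
        by_cases hx : x ∈ S ∩ A <;> simp [hx]
    _ = (c • (m.restrict A).withDensity (fun x => N x B)) S := by
        rw [Measure.smul_apply, smul_eq_mul, withDensity_apply _ hS, Measure.restrict_restrict hS]

lemma map_fst_absolutelyContinuous
    (hJ : ∀ S : Set (E × E), MeasurableSet S → J S ≤ c * ∫⁻ x, N x (Prod.mk x ⁻¹' S) ∂m) :
    J.map Prod.fst ≪ m := by
  have h := map_fst_restrict_prod_le hJ MeasurableSet.univ MeasurableSet.univ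
  rw [Set.univ_prod_univ, Measure.restrict_univ, Measure.restrict_univ] at h
  exact (Measure.absolutelyContinuous_of_le_smul h).trans (withDensity_absolutelyContinuous _ _)

lemma map_snd_eq_map_fst_of_map_swap (hsym : J.map Prod.swap = J) :
    J.map Prod.snd = J.map Prod.fst := by
  conv_lhs => rw [← hsym]
  rw [Measure.map_map measurable_snd measurable_swap]
  rfl

lemma ae_eq_comp_fst_of_ae_eq
    (hJ : ∀ S : Set (E × E), MeasurableSet S → J S ≤ c * ∫⁻ x, N x (Prod.mk x ⁻¹' S) ∂m)
    {α : Type*} {u v : E → α} (huv : u =ᵐ[m] v) : (u ∘ Prod.fst) =ᵐ[J] (v ∘ Prod.fst) :=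
  ae_eq_comp measurable_fst.aemeasurable ((map_fst_absolutelyContinuous hJ).ae_eq huv)

lemma ae_eq_comp_snd_of_ae_eq (hsym : J.map Prod.swap = J)
    (hJ : ∀ S : Set (E × E), MeasurableSet S → J S ≤ c * ∫⁻ x, N x (Prod.mk x ⁻¹' S) ∂m)
    {α : Type*} {u v : E → α} (huv : u =ᵐ[m] v) : (u ∘ Prod.snd) =ᵐ[J] (v ∘ Prod.snd) := by
  refine ae_eq_comp measurable_snd.aemeasurable ?_
  rw [map_snd_eq_map_fst_of_map_swap hsym]
  exact (map_fst_absolutelyContinuous hJ).ae_eq huv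

lemma setLIntegral_prod_comp_fst_le
    (hJ : ∀ S : Set (E × E), MeasurableSet S → J S ≤ c * ∫⁻ x, N x (Prod.mk x ⁻¹' S) ∂m)
    {A B : Set E} (hA : MeasurableSet A) (hB : MeasurableSet B)
    (hNB : Measurable fun x => N x B) {h : E → ℝ≥0∞} (hh : Measurable h) :
    ∫⁻ z in A ×ˢ B, h z.1 ∂J ≤ c * ∫⁻ x in A, h x * N x B ∂m :=
  calc ∫⁻ z in A ×ˢ B, h z.1 ∂J = ∫⁻ x, h x ∂(J.restrict (A ×ˢ B)).map Prod.fst :=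
        (lintegral_map hh measurable_fst).symm
    _ ≤ ∫⁻ x, h x ∂(c • (m.restrict A).withDensity (fun x => N x B)) :=
        lintegral_mono' (map_fst_restrict_prod_le hJ hA hB) le_rfl
    _ = c * ∫⁻ x in A, h x * N x B ∂m := by
        simp_rw [lintegral_smul_measure, lintegral_withDensity_eq_lintegral_mul _ hNB hh,
          Pi.mul_apply, mul_comm (N _ B), smul_eq_mul]

lemma setLIntegral_prod_comp_fst_le_mul
    (hJ : ∀ S : Set (E × E), MeasurableSet S → J S ≤ c * ∫⁻ x, N x (Prod.mk x ⁻¹' S) ∂m)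
    {A B : Set E} (hA : MeasurableSet A) (hB : MeasurableSet B)
    (hNB : Measurable fun x => N x B) {K : ℝ≥0∞} (hK : ∀ᵐ x ∂m, x ∈ A → N x B ≤ K)
    {h : E → ℝ≥0∞} (hh : Measurable h) :
    ∫⁻ z in A ×ˢ B, h z.1 ∂J ≤ c * (K * ∫⁻ x in A, h x ∂m) := by
  refine (setLIntegral_prod_comp_fst_le hJ hA hB hNB hh).trans (mul_le_mul_right ?_ c)
  calc ∫⁻ x in A, h x * N x B ∂m ≤ ∫⁻ x in A, h x * K ∂m :=
        setLIntegral_mono_ae' hA (hK.mono fun x hx hxA => mul_le_mul_right (hx hxA) _)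
    _ = K * ∫⁻ x in A, h x ∂m := by rw [lintegral_mul_const _ hh, mul_comm]

lemma setLIntegral_prod_comp_snd_of_map_swap (hsym : J.map Prod.swap = J)
    {A B : Set E} (hA : MeasurableSet A) (hB : MeasurableSet B)
    {h : E → ℝ≥0∞} (hh : Measurable h) :
    ∫⁻ z in A ×ˢ B, h z.2 ∂J = ∫⁻ z in B ×ˢ A, h z.1 ∂J := by
  conv_lhs => rw [← hsym]
  rw [Measure.restrict_map measurable_swap (hA.prod hB), Set.preimage_swap_prod,
    lintegral_map (f := fun z => h z.2) (by fun_prop) measurable_swap]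
  rfl

lemma setLIntegral_sq_sub_lt_top
    (hN : ∀ A : Set E, MeasurableSet A → Measurable fun x => N x A)
    (hsym : J.map Prod.swap = J) (hc : c ≠ ∞)
    (hJ : ∀ S : Set (E × E), MeasurableSet S → J S ≤ c * ∫⁻ x, N x (Prod.mk x ⁻¹' S) ∂m)
    {A B : Set E} (hA : MeasurableSet A) (hB : MeasurableSet B) (hmA : m A ≠ ∞)
    {K : ℝ≥0∞} (hK : K ≠ ∞) (hAB : ∀ᵐ x ∂m, x ∈ A → N x B ≤ K)
    (hBA : ∀ᵐ x ∂m, x ∈ B → N x A ≤ K)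
    {p : ℝ} (hp : 2 ≤ p) {u : E → ℝ} (hu : Measurable u) (hup : ∫⁻ x, ‖u x‖ₑ ^ p ∂m ≠ ∞) :
    ∫⁻ z in A ×ˢ B, ENNReal.ofReal ((u z.1 - u z.2) ^ 2) ∂J < ∞ := by
  set F : E → ℝ≥0∞ := fun x => ‖u x‖ₑ ^ p
  have hF : Measurable F := by fun_prop
  have hFC (C : Set E) : c * (K * ∫⁻ x in C, F x ∂m) < ∞ :=
    mul_lt_top hc.lt_top
      (mul_lt_top hK.lt_top ((setLIntegral_le_lintegral _ _).trans_lt hup.lt_top))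
  have hJAB : J (A ×ˢ B) < ∞ := by
    have h := setLIntegral_prod_comp_fst_le_mul hJ hA hB (hN B hB) hAB (h := fun _ => 1)
      measurable_const
    rw [setLIntegral_one, setLIntegral_one] at h
    exact h.trans_lt (mul_lt_top hc.lt_top (mul_lt_top hK.lt_top hmA.lt_top))
  have hFA : ∫⁻ z in A ×ˢ B, F z.1 ∂J < ∞ :=
    (setLIntegral_prod_comp_fst_le_mul hJ hA hB (hN B hB) hAB hF).trans_lt (hFC A)
  have hFB : ∫⁻ z in A ×ˢ B, F z.2 ∂J < ∞ := by
    rw [setLIntegral_prod_comp_snd_of_map_swap hsym hA hB hF]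
    exact (setLIntegral_prod_comp_fst_le_mul hJ hB hA (hN A hA) hBA hF).trans_lt (hFC B)
  calc ∫⁻ z in A ×ˢ B, ENNReal.ofReal ((u z.1 - u z.2) ^ 2) ∂J
      ≤ ∫⁻ z in A ×ˢ B, (4 + 2 * F z.1 + 2 * F z.2) ∂J :=
        lintegral_mono fun z => ofReal_sq_sub_le hp (u z.1) (u z.2)
    _ = 4 * J (A ×ˢ B) + 2 * ∫⁻ z in A ×ˢ B, F z.1 ∂J + 2 * ∫⁻ z in A ×ˢ B, F z.2 ∂J := by
        rw [lintegral_add_right _ (by fun_prop), lintegral_add_right _ (by fun_prop),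
          lintegral_const, lintegral_const_mul _ (by fun_prop),
          lintegral_const_mul _ (by fun_prop), Measure.restrict_apply_univ]
    _ < ∞ := by
        refine add_lt_top.2 ⟨add_lt_top.2 ⟨?_, ?_⟩, ?_⟩ <;> exact mul_lt_top (by norm_num) ‹_›

end KernelDomination

theorem stmt_4_general {E : Type*} [MetricSpace E] [MeasurableSpace E] [BorelSpace E]
    (m : Measure E) [IsFiniteMeasureOnCompacts m]
    (N : E → Measure E)
    (hN : ∀ A : Set E, MeasurableSet A → Measurable fun x => N x A)
    (J : Measure (E × E)) (hsym : J.map Prod.swap = J)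
    (D₂ : ℝ)
    (hJ : ∀ A : Set (E × E), MeasurableSet A →
      J A ≤ ENNReal.ofReal D₂ * ∫⁻ x, N x (Prod.mk x ⁻¹' A) ∂m)
    (β : ℝ) (hβ : 0 < β) (Mβ : ℝ≥0∞) (hMβ : Mβ < ⊤)
    (hbound : ∀ᵐ x ∂m, ∫⁻ y, ENNReal.ofReal (min 1 (dist x y ^ β)) ∂(N x) ≤ Mβ)
    (p : ℝ) (hp : 2 ≤ p) (u : E → ℝ) (hu : MemLp u (ENNReal.ofReal p) m)
    (U V : Set E) (hU : IsOpen U) (hV : IsOpen V)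
    (hUc : IsCompact (closure U)) (hUV : closure U ⊆ V) :
    ∫⁻ z in U ×ˢ Vᶜ, ENNReal.ofReal ((u z.1 - u z.2) ^ 2) ∂J < ⊤ := by
  obtain ⟨δ, hδ, hsep⟩ := hUc.exists_pos_forall_le_dist_compl hV hUV
  have hK : Mβ / ENNReal.ofReal (min 1 (δ ^ β)) ≠ ∞ := ENNReal.div_ne_top hMβ.ne
    (ENNReal.ofReal_pos.2 (lt_min one_pos (Real.rpow_pos_of_pos hδ β))).ne'
  have hUVc : ∀ x ∈ U, ∀ y ∈ Vᶜ, δ ≤ dist x y := fun x hx => hsep x (subset_closure hx)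
  obtain ⟨v, hv, huv⟩ := hu.aestronglyMeasurable.aemeasurable
  have hvp : ∫⁻ x, ‖v x‖ₑ ^ p ∂m ≠ ∞ := by
    have h := lintegral_rpow_enorm_lt_top_of_eLpNorm_lt_top
      (ENNReal.ofReal_pos.2 (by linarith)).ne' ofReal_ne_top (hu.ae_eq huv).2
    rw [ENNReal.toReal_ofReal (by linarith)] at h
    exact h.ne
  have hae : ∀ᵐ z ∂J.restrict (U ×ˢ Vᶜ),
      ENNReal.ofReal ((u z.1 - u z.2) ^ 2) = ENNReal.ofReal ((v z.1 - v z.2) ^ 2) := by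
    filter_upwards [ae_restrict_of_ae (ae_eq_comp_fst_of_ae_eq hJ huv),
      ae_restrict_of_ae (ae_eq_comp_snd_of_ae_eq hsym hJ huv)] with z h1 h2
    simp only [Function.comp_apply] at h1 h2
    rw [h1, h2]
  rw [lintegral_congr_ae hae]
  exact setLIntegral_sq_sub_lt_top hN hsym ofReal_ne_top hJ hU.measurableSet
    hV.measurableSet.compl ((measure_mono subset_closure).trans_lt hUc.measure_lt_top).ne hK
    (ae_measure_le_div_of_le_dist hβ.le hδ hbound hUVc)
    (ae_measure_le_div_of_le_dist hβ.le hδ hbound fun y hy x hx => dist_comm x y ▸ hUVc x hx y hy)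
    hp hv hvp

/-- Let `(E, ρ)` be a metric space, `m` a Borel measure finite on
compacts, `N` a measurable kernel from `E` to `E`, and `J` a symmetric Borel measure
on `E × E` with `J(A) ≤ D₂ ∫ N(x, A_x) dm(x)`. Assume there are `β > 0`, `M_β < ∞`
with `∫ min(1, ρ(x,y)^β) N(x, dy) ≤ M_β` for `m`-a.e. `x`. If `p ∈ [2,∞)` and
`u ∈ L^p(E;m)`, then for all open `U, V` with `closure U` compact and contained in
`V`, `∫_{U × (E∖V)} |u(x) − u(y)|² dJ < ∞`. -/
theorem stmt_4 {E : Type*} [MetricSpace E] [MeasurableSpace E] [BorelSpace E]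
    (m : Measure E) [IsFiniteMeasureOnCompacts m]
    (N : E → Measure E)
    (hN : ∀ A : Set E, MeasurableSet A → Measurable fun x => N x A)
    (J : Measure (E × E)) (hsym : J.map Prod.swap = J)
    (D₂ : ℝ) (hD₂ : 0 < D₂)
    (hJ : ∀ A : Set (E × E), MeasurableSet A →
      J A ≤ ENNReal.ofReal D₂ * ∫⁻ x, N x (Prod.mk x ⁻¹' A) ∂m)
    (β : ℝ) (hβ : 0 < β) (Mβ : ℝ≥0∞) (hMβ : Mβ < ⊤)
    (hbound : ∀ᵐ x ∂m, ∫⁻ y, ENNReal.ofReal (min 1 (dist x y ^ β)) ∂(N x) ≤ Mβ)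
    (p : ℝ) (hp : 2 ≤ p) (u : E → ℝ) (hu : MemLp u (ENNReal.ofReal p) m)
    (U V : Set E) (hU : IsOpen U) (hV : IsOpen V)
    (hUc : IsCompact (closure U)) (hUV : closure U ⊆ V) :
    ∫⁻ z in U ×ˢ Vᶜ, ENNReal.ofReal ((u z.1 - u z.2) ^ 2) ∂J < ⊤ :=
  stmt_4_general m N hN J hsym D₂ hJ β hβ Mβ hMβ hbound p hp u hu U V hU hV hUc hUV
end

section
/- Assume w_{p₁} ∈ L¹(E; m) and let u : E → ℝ be locally square-integrable with respect to m (square-integrable on every compact set). Then the following are equivalent: (3) w_{p₁} · |u|² ∈ L¹(E; m); (4) for all open sets U, V with U ⋐ V, the closure of V compact, and o ∈ V, one has ∫_{U × (E∖V)} |u(x) − u(y)|² dJ(x,y) < ∞. -/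
open MeasureTheory ENNReal

/-!
Write `w y = min 1 (ρ(y,o)^(-p₁)) = max 1 ρ(y,o) ^ (-p₁)`. For `x` in a bounded set `U`,
`ρ(x,y) ≤ (R + 1) * max 1 ρ(y,o)`, hence `w y ≲ ρ(x,y)^(-p₁)`. If moreover `ρ(x,y) ≥ δ > 0`, as
for `U ⋐ V` and `y ∉ V`, then also `max 1 ρ(y,o) ≲ ρ(x,y)`, hence `ρ(x,y)^(-p) ≲ w y` for every
`p ≥ p₁`. With the upper bound on `J` and `(a - b)² ≤ 2a² + 2b²`, this bounds the `J`-energy of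
`u` on `U × Vᶜ` by `‖u‖²_{L²(U)} ‖w‖₁ + m(U) ∫ w u²`. Conversely, the lower bound on `J` and
`u(y)² ≤ 2u(x)² + 2(u(x) - u(y))²` bound `m(U) ∫_{Vᶜ} w u²` by that energy plus
`‖u‖²_{L²(U)} ‖w‖₁`, while on the relatively compact `V` we have `w ≤ 1` and `u ∈ L²`.
-/

namespace ENNReal

theorem rpow_le_rpow_of_nonpos {x y : ℝ≥0∞} {z : ℝ} (hxy : x ≤ y) (hz : z ≤ 0) :
    y ^ z ≤ x ^ z := by
  obtain ⟨q, rfl⟩ : ∃ q, z = -q := ⟨-z, (neg_neg z).symm⟩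
  rw [rpow_neg, rpow_neg]
  exact ENNReal.inv_le_inv' (rpow_le_rpow hxy (neg_nonpos.1 hz))

theorem min_one_rpow_neg_eq {p : ℝ} (hp : 0 ≤ p) (t : ℝ≥0∞) :
    min 1 (t ^ (-p)) = max 1 t ^ (-p) := by
  rcases le_total 1 t with h | h
  · rw [max_eq_right h, min_eq_right]
    simpa using rpow_le_rpow_of_nonpos h (neg_nonpos.2 hp)
  · rw [max_eq_left h, one_rpow, min_eq_left]
    simpa using rpow_le_rpow_of_nonpos h (neg_nonpos.2 hp)

theorem rpow_neg_le_mul_rpow_neg_of_le_mul {p : ℝ} (hp : 0 ≤ p) {a b c : ℝ≥0∞}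
    (hc₀ : c ≠ 0) (hc : c ≠ ⊤) (hb : b ≠ 0) (h : a ≤ c * b) :
    b ^ (-p) ≤ c ^ p * a ^ (-p) :=
  calc b ^ (-p) = c ^ p * (c ^ (-p) * b ^ (-p)) := by
        rw [← mul_assoc, rpow_neg c, ENNReal.mul_inv_cancel
          (rpow_pos_of_nonneg (pos_iff_ne_zero.2 hc₀) hp).ne' (rpow_ne_top_of_nonneg hp hc),
          one_mul]
    _ = c ^ p * (c * b) ^ (-p) := by rw [mul_rpow_of_ne_zero hc₀ hb]
    _ ≤ c ^ p * a ^ (-p) :=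
        mul_le_mul_of_nonneg_left (rpow_le_rpow_of_nonpos h (neg_nonpos.2 hp)) zero_le

theorem ofReal_sub_sq_le (a b : ℝ) :
    ENNReal.ofReal ((a - b) ^ 2) ≤ 2 * (ENNReal.ofReal (a ^ 2) + ENNReal.ofReal (b ^ 2)) := by
  rw [← ofReal_add (sq_nonneg a) (sq_nonneg b), ← ofReal_ofNat 2, ← ofReal_mul zero_le_two]
  exact ofReal_le_ofReal (by nlinarith [sq_nonneg (a + b)])

end ENNReal

section PseudoMetric

variable {α : Type*} [PseudoMetricSpace α]

theorem exists_edist_rpow_neg_le_mul_min_one {p₁ p : ℝ} (hp₁ : 0 ≤ p₁) (hp : p₁ ≤ p)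
    {R δ : ℝ≥0∞} (hR : R ≠ ⊤) (hδ₀ : δ ≠ 0) (hδ : δ ≠ ⊤) :
    ∃ C ≠ ⊤, ∀ x y o : α, edist x o ≤ R → δ ≤ edist x y →
      edist x y ^ (-p) ≤ C * min 1 (edist y o ^ (-p₁)) := by
  set K := (1 + R) / δ + 1
  have hK₀ : K ≠ 0 := by simp [K]
  have hK : K ≠ ⊤ := by simp [K, ENNReal.div_eq_top, hR, hδ₀]
  refine ⟨K ^ p, rpow_ne_top_of_nonneg (hp₁.trans hp) hK, fun x y o hx hxy => ?_⟩
  have hxy₀ : edist x y ≠ 0 := (lt_of_lt_of_le (pos_iff_ne_zero.2 hδ₀) hxy).ne'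
  have hM : 1 ≤ max 1 (edist y o) := le_max_left _ _
  have hMK : max 1 (edist y o) ≤ K * edist x y :=
    calc max 1 (edist y o) ≤ 1 + (edist x y + R) := by
          refine max_le le_self_add ?_
          calc edist y o ≤ edist y x + edist x o := edist_triangle _ _ _
            _ ≤ 1 + (edist x y + R) := by
                rw [edist_comm y x]
                exact (add_le_add_right hx _).trans le_add_self
      _ = (1 + R) / δ * δ + edist x y := by rw [ENNReal.div_mul_cancel hδ₀ hδ]; ring
      _ ≤ K * edist x y := by rw [add_mul, one_mul]; gcongr
  calc edist x y ^ (-p) ≤ K ^ p * max 1 (edist y o) ^ (-p) :=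
        ENNReal.rpow_neg_le_mul_rpow_neg_of_le_mul (hp₁.trans hp) hK₀ hK hxy₀ hMK
    _ ≤ K ^ p * max 1 (edist y o) ^ (-p₁) := by gcongr
    _ = K ^ p * min 1 (edist y o ^ (-p₁)) := by rw [ENNReal.min_one_rpow_neg_eq hp₁]

theorem exists_min_one_edist_rpow_neg_le_mul {p : ℝ} (hp : 0 ≤ p) {R : ℝ≥0∞} (hR : R ≠ ⊤) :
    ∃ C ≠ ⊤, ∀ x y o : α, edist x o ≤ R →
      min 1 (edist y o ^ (-p)) ≤ C * edist x y ^ (-p) := by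
  refine ⟨(R + 1) ^ p, rpow_ne_top_of_nonneg hp (by simp [hR]), fun x y o hx => ?_⟩
  have hM : 1 ≤ max 1 (edist y o) := le_max_left _ _
  have hxy : edist x y ≤ (R + 1) * max 1 (edist y o) :=
    calc edist x y ≤ edist x o + edist o y := edist_triangle _ _ _
      _ ≤ R * max 1 (edist y o) + max 1 (edist y o) := by
          rw [edist_comm o y]
          gcongr
          · exact hx.trans (le_mul_of_one_le_right' hM)
          · exact le_max_right _ _
      _ = (R + 1) * max 1 (edist y o) := by ring
  rw [ENNReal.min_one_rpow_neg_eq hp]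
  exact ENNReal.rpow_neg_le_mul_rpow_neg_of_le_mul hp (by simp) (by simp [hR])
    (one_pos.trans_le hM).ne' hxy

end PseudoMetric

section Measure

variable {X Y : Type*} [MeasurableSpace X] [MeasurableSpace Y]

theorem setLIntegral_prod_mul {μ : Measure X} {ν : Measure Y} [SFinite μ] [SFinite ν] {s : Set X}
    {t : Set Y} {f : X → ℝ≥0∞} {g : Y → ℝ≥0∞} (hf : AEMeasurable f (μ.restrict s))
    (hg : AEMeasurable g (ν.restrict t)) :
    ∫⁻ z in s ×ˢ t, f z.1 * g z.2 ∂μ.prod ν = (∫⁻ x in s, f x ∂μ) * ∫⁻ y in t, g y ∂ν := by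
  rw [← Measure.prod_restrict, lintegral_prod_mul hf hg]

theorem lintegral_lt_top_of_le_mul_add {μ : Measure X} {c : ℝ≥0∞} (hc : c ≠ ⊤)
    {f g h : X → ℝ≥0∞} (hf : AEMeasurable f μ) (hfi : ∫⁻ x, f x ∂μ < ⊤)
    (hgi : ∫⁻ x, g x ∂μ < ⊤) (hle : ∀ x, h x ≤ c * (f x + g x)) : ∫⁻ x, h x ∂μ < ⊤ :=
  calc ∫⁻ x, h x ∂μ ≤ ∫⁻ x, c * (f x + g x) ∂μ := lintegral_mono hle
    _ = c * (∫⁻ x, f x ∂μ + ∫⁻ x, g x ∂μ) := by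
        rw [lintegral_const_mul' c _ hc, lintegral_add_left' hf]
    _ < ⊤ := mul_lt_top hc.lt_top (add_lt_top.2 ⟨hfi, hgi⟩)

variable {μ ν : Measure X} {c : ℝ≥0∞} {k : X → ℝ≥0∞} {s : Set X}

theorem setLIntegral_le_mul_setLIntegral_mul (hk : Measurable k)
    (h : ∀ A, MeasurableSet A → μ A ≤ c * ∫⁻ z in A, k z ∂ν) (hs : MeasurableSet s)
    (f : X → ℝ≥0∞) : ∫⁻ z in s, f z ∂μ ≤ c * ∫⁻ z in s, k z * f z ∂ν := by
  have hμ : μ ≤ c • ν.withDensity k := Measure.le_iff.2 fun A hA => by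
    simpa [withDensity_apply _ hA] using h A hA
  calc ∫⁻ z in s, f z ∂μ ≤ ∫⁻ z in s, f z ∂(c • ν.withDensity k) :=
        lintegral_mono' (Measure.restrict_mono subset_rfl hμ) le_rfl
    _ = c * ∫⁻ z, f z ∂(ν.restrict s).withDensity k := by
        rw [Measure.restrict_smul, lintegral_smul_measure, restrict_withDensity hs, smul_eq_mul]
    _ ≤ c * ∫⁻ z in s, k z * f z ∂ν := by
        gcongr c * ?_
        exact lintegral_withDensity_le_lintegral_mul _ hk f

theorem mul_setLIntegral_mul_le_setLIntegral (hk : Measurable k)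
    (h : ∀ A, MeasurableSet A → c * ∫⁻ z in A, k z ∂ν ≤ μ A) (hs : MeasurableSet s)
    (hk_fin : ∀ᵐ z ∂ν.restrict s, k z < ⊤) (f : X → ℝ≥0∞) :
    c * ∫⁻ z in s, k z * f z ∂ν ≤ ∫⁻ z in s, f z ∂μ := by
  have hμ : c • ν.withDensity k ≤ μ := Measure.le_iff.2 fun A hA => by
    simpa [withDensity_apply _ hA] using h A hA
  calc c * ∫⁻ z in s, k z * f z ∂ν = ∫⁻ z in s, f z ∂(c • ν.withDensity k) := by
        rw [Measure.restrict_smul, lintegral_smul_measure, smul_eq_mul,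
          setLIntegral_withDensity_eq_setLIntegral_mul_non_measurable _ hk f hs hk_fin]
        rfl
    _ ≤ ∫⁻ z in s, f z ∂μ := lintegral_mono' (Measure.restrict_mono subset_rfl hμ) le_rfl

end Measure

section MetricMeasure

variable {E : Type*} [MetricSpace E]

theorem Bornology.IsBounded.exists_edist_le {s : Set E} (hs : Bornology.IsBounded s) (o : E) :
    ∃ R ≠ ⊤, ∀ x ∈ s, edist x o ≤ R := by
  obtain ⟨r, hr⟩ := hs.subset_closedBall o
  exact ⟨ENNReal.ofReal r, ofReal_ne_top, fun x hx => by
    rw [edist_dist]; exact ofReal_le_ofReal (hr hx)⟩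

theorem exists_min_one_edist_rpow_neg_le_mul_of_isBounded {p : ℝ} (hp : 0 ≤ p) (o : E)
    {U : Set E} (hU : Bornology.IsBounded U) :
    ∃ C ≠ ⊤, ∀ x ∈ U, ∀ y, min 1 (edist y o ^ (-p)) ≤ C * edist x y ^ (-p) := by
  obtain ⟨R, hR, hUR⟩ := hU.exists_edist_le o
  obtain ⟨C, hC, hxy⟩ := exists_min_one_edist_rpow_neg_le_mul (α := E) hp hR
  exact ⟨C, hC, fun x hx y => hxy x y o (hUR x hx)⟩

theorem exists_edist_rpow_neg_le_mul_min_one_of_closure_subset {p₁ p : ℝ} (hp₁ : 0 ≤ p₁)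
    (hp : p₁ ≤ p) (o : E) {U V : Set E} (hU : IsCompact (closure U)) (hV : IsOpen V)
    (hUV : closure U ⊆ V) :
    ∃ C ≠ ⊤, ∀ x ∈ U, ∀ y ∉ V, edist x y ^ (-p) ≤ C * min 1 (edist y o ^ (-p₁)) := by
  obtain ⟨R, hR, hUR⟩ := (hU.isBounded.subset subset_closure).exists_edist_le o
  obtain ⟨δ, hδ, hUδ⟩ := Metric.exists_pos_forall_lt_edist hU hV.isClosed_compl
    (Set.disjoint_compl_right_iff_subset.2 hUV)
  obtain ⟨C, hC, hxy⟩ := exists_edist_rpow_neg_le_mul_min_one (α := E) hp₁ hp hR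
    (coe_ne_zero.2 hδ.ne') coe_ne_top
  exact ⟨C, hC, fun x hx y hy => hxy x y o (hUR x hx) (hUδ x (subset_closure hx) y hy).le⟩

variable [MeasurableSpace E] [BorelSpace E] {m : Measure E} {a : E → ℝ≥0∞}

theorem aemeasurable_fst_mul_edist_rpow_neg [SecondCountableTopology E] (ha : AEMeasurable a m)
    (p : ℝ) : AEMeasurable (fun z : E × E => a z.1 * edist z.1 z.2 ^ (-p)) (m.prod m) :=
  (ha.comp_quasiMeasurePreserving Measure.quasiMeasurePreserving_fst).mul
    (by fun_prop : Measurable fun z : E × E => edist z.1 z.2 ^ (-p)).aemeasurable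

variable [SFinite m] {o : E} {p₁ p : ℝ} {U V : Set E}

theorem setLIntegral_prod_mul_edist_rpow_neg_lt_top_of_fst (hp₁ : 0 ≤ p₁) (hp : p₁ ≤ p)
    (hw : ∫⁻ y, min 1 (edist y o ^ (-p₁)) ∂m < ⊤) (ha : AEMeasurable a m)
    (haU : ∫⁻ x in closure U, a x ∂m < ⊤) (hUo : IsOpen U) (hU : IsCompact (closure U))
    (hV : IsOpen V) (hUV : closure U ⊆ V) :
    ∫⁻ z in U ×ˢ Vᶜ, a z.1 * edist z.1 z.2 ^ (-p) ∂m.prod m < ⊤ := by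
  obtain ⟨C, hC, hk⟩ := exists_edist_rpow_neg_le_mul_min_one_of_closure_subset hp₁ hp o hU hV hUV
  calc ∫⁻ z in U ×ˢ Vᶜ, a z.1 * edist z.1 z.2 ^ (-p) ∂m.prod m
      ≤ ∫⁻ z in U ×ˢ Vᶜ, a z.1 * (C * min 1 (edist z.2 o ^ (-p₁))) ∂m.prod m :=
        setLIntegral_mono' (hUo.measurableSet.prod hV.measurableSet.compl) fun z hz =>
          mul_le_mul_of_nonneg_left (hk _ hz.1 _ hz.2) zero_le
    _ = (∫⁻ x in U, a x ∂m) * ∫⁻ y in Vᶜ, C * min 1 (edist y o ^ (-p₁)) ∂m :=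
        setLIntegral_prod_mul ha.restrict
          (by fun_prop : Measurable fun y => C * min 1 (edist y o ^ (-p₁))).aemeasurable
    _ < ⊤ := by
        refine mul_lt_top ((lintegral_mono_set subset_closure).trans_lt haU) ?_
        rw [lintegral_const_mul' C _ hC]
        exact mul_lt_top hC.lt_top ((setLIntegral_le_lintegral _ _).trans_lt hw)

theorem setLIntegral_prod_mul_edist_rpow_neg_lt_top_of_snd [IsFiniteMeasureOnCompacts m]
    (hp₁ : 0 ≤ p₁) (hp : p₁ ≤ p) (ha : AEMeasurable a m)
    (haw : ∫⁻ y, min 1 (edist y o ^ (-p₁)) * a y ∂m < ⊤) (hUo : IsOpen U)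
    (hU : IsCompact (closure U)) (hV : IsOpen V) (hUV : closure U ⊆ V) :
    ∫⁻ z in U ×ˢ Vᶜ, a z.2 * edist z.1 z.2 ^ (-p) ∂m.prod m < ⊤ := by
  obtain ⟨C, hC, hk⟩ := exists_edist_rpow_neg_le_mul_min_one_of_closure_subset hp₁ hp o hU hV hUV
  have hwa : AEMeasurable (fun y => C * (min 1 (edist y o ^ (-p₁)) * a y)) m :=
    ((by fun_prop : Measurable fun y => min 1 (edist y o ^ (-p₁))).aemeasurable.mul ha).const_mul C
  calc ∫⁻ z in U ×ˢ Vᶜ, a z.2 * edist z.1 z.2 ^ (-p) ∂m.prod m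
      ≤ ∫⁻ z in U ×ˢ Vᶜ, 1 * (C * (min 1 (edist z.2 o ^ (-p₁)) * a z.2)) ∂m.prod m :=
        setLIntegral_mono' (hUo.measurableSet.prod hV.measurableSet.compl) fun z hz =>
          calc a z.2 * edist z.1 z.2 ^ (-p) ≤ a z.2 * (C * min 1 (edist z.2 o ^ (-p₁))) :=
                mul_le_mul_of_nonneg_left (hk _ hz.1 _ hz.2) zero_le
            _ = 1 * (C * (min 1 (edist z.2 o ^ (-p₁)) * a z.2)) := by ring
    _ = m U * (C * ∫⁻ y in Vᶜ, min 1 (edist y o ^ (-p₁)) * a y ∂m) := by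
        rw [setLIntegral_prod_mul aemeasurable_const hwa.restrict, setLIntegral_const, one_mul,
          lintegral_const_mul' C _ hC]
    _ < ⊤ := mul_lt_top ((measure_mono subset_closure).trans_lt hU.measure_lt_top)
        (mul_lt_top hC.lt_top ((setLIntegral_le_lintegral _ _).trans_lt haw))

theorem setLIntegral_min_one_mul_lt_top_of_setLIntegral_prod_lt_top (hp : 0 ≤ p)
    {T : Set E} (ha : AEMeasurable a m) (hU : Bornology.IsBounded U) (hUm : MeasurableSet U)
    (hT : MeasurableSet T) (hmU : m U ≠ 0)
    (h : ∫⁻ z in U ×ˢ T, a z.2 * edist z.1 z.2 ^ (-p) ∂m.prod m < ⊤) :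
    ∫⁻ y in T, min 1 (edist y o ^ (-p)) * a y ∂m < ⊤ := by
  obtain ⟨C, hC, hk⟩ := exists_min_one_edist_rpow_neg_le_mul_of_isBounded hp o hU
  have hwa : AEMeasurable (fun y => min 1 (edist y o ^ (-p)) * a y) m :=
    (by fun_prop : Measurable fun y => min 1 (edist y o ^ (-p))).aemeasurable.mul ha
  refine lt_top_of_mul_ne_top_right (ne_top_of_le_ne_top (mul_lt_top hC.lt_top h).ne ?_) hmU
  calc m U * ∫⁻ y in T, min 1 (edist y o ^ (-p)) * a y ∂m
      = ∫⁻ z in U ×ˢ T, 1 * (min 1 (edist z.2 o ^ (-p)) * a z.2) ∂m.prod m := by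
        rw [setLIntegral_prod_mul aemeasurable_const hwa.restrict,
          setLIntegral_const, one_mul]
    _ ≤ ∫⁻ z in U ×ˢ T, C * (a z.2 * edist z.1 z.2 ^ (-p)) ∂m.prod m :=
        setLIntegral_mono' (hUm.prod hT) fun z hz =>
          calc 1 * (min 1 (edist z.2 o ^ (-p)) * a z.2) ≤ a z.2 * (C * edist z.1 z.2 ^ (-p)) := by
                rw [one_mul, mul_comm]; exact mul_le_mul_of_nonneg_left (hk _ hz.1 _) zero_le
            _ = C * (a z.2 * edist z.1 z.2 ^ (-p)) := by ring
    _ = C * ∫⁻ z in U ×ˢ T, a z.2 * edist z.1 z.2 ^ (-p) ∂m.prod m := lintegral_const_mul' C _ hC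

end MetricMeasure

section JumpKernel

variable {E : Type*} [MetricSpace E] [MeasurableSpace E] [BorelSpace E]
  [SecondCountableTopology E] {m : Measure E} [SFinite m] {o : E}
  {J : Measure (E × E)} {p₁ : ℝ} {u : E → ℝ}

theorem setLIntegral_sq_sub_lt_top_of_lintegral_min_one_mul_lt_top [IsFiniteMeasureOnCompacts m]
    {D₂ p₂ : ℝ} (hp₁ : 0 ≤ p₁)
    (hp₁₂ : p₁ ≤ p₂)
    (hJu : ∀ A : Set (E × E), MeasurableSet A →
      J A ≤ ENNReal.ofReal D₂ * ∫⁻ z in A, edist z.1 z.2 ^ (-p₂) ∂(m.prod m))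
    (hw : ∫⁻ y, min 1 (edist y o ^ (-p₁)) ∂m < ⊤)
    (hu_meas : AEMeasurable (fun x => ENNReal.ofReal (u x ^ 2)) m)
    (hu : ∀ K : Set E, IsCompact K → IntegrableOn (fun x => u x ^ 2) K m)
    (h : ∫⁻ y, min 1 (edist y o ^ (-p₁)) * ENNReal.ofReal (u y ^ 2) ∂m < ⊤)
    {U V : Set E} (hU : IsOpen U) (hV : IsOpen V) (hUc : IsCompact (closure U))
    (hUV : closure U ⊆ V) :
    ∫⁻ z in U ×ˢ Vᶜ, ENNReal.ofReal ((u z.1 - u z.2) ^ 2) ∂J < ⊤ := by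
  have hk : Measurable fun z : E × E => edist z.1 z.2 ^ (-p₂) := by fun_prop
  refine (setLIntegral_le_mul_setLIntegral_mul hk hJu (hU.measurableSet.prod
    hV.measurableSet.compl) _).trans_lt (mul_lt_top ofReal_lt_top ?_)
  refine lintegral_lt_top_of_le_mul_add (ofNat_ne_top (n := 2))
    (aemeasurable_fst_mul_edist_rpow_neg hu_meas p₂).restrict
    (setLIntegral_prod_mul_edist_rpow_neg_lt_top_of_fst hp₁ hp₁₂ hw hu_meas
      (hu _ hUc).lintegral_lt_top hU hUc hV hUV)
    (setLIntegral_prod_mul_edist_rpow_neg_lt_top_of_snd hp₁ hp₁₂ hu_meas h hU hUc hV hUV)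
    fun z => ?_
  calc edist z.1 z.2 ^ (-p₂) * ENNReal.ofReal ((u z.1 - u z.2) ^ 2)
      ≤ edist z.1 z.2 ^ (-p₂) * (2 * (ENNReal.ofReal (u z.1 ^ 2) + ENNReal.ofReal (u z.2 ^ 2))) :=
        mul_le_mul_of_nonneg_left (ofReal_sub_sq_le _ _) zero_le
    _ = 2 * (ENNReal.ofReal (u z.1 ^ 2) * edist z.1 z.2 ^ (-p₂) +
          ENNReal.ofReal (u z.2 ^ 2) * edist z.1 z.2 ^ (-p₂)) := by ring

theorem setLIntegral_prod_sq_snd_lt_top_of_sq_sub (hp₁ : 0 ≤ p₁)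
    (hw : ∫⁻ y, min 1 (edist y o ^ (-p₁)) ∂m < ⊤)
    (hu_meas : AEMeasurable (fun x => ENNReal.ofReal (u x ^ 2)) m)
    {U V : Set E} (huU : ∫⁻ x in closure U, ENNReal.ofReal (u x ^ 2) ∂m < ⊤) (hU : IsOpen U)
    (hUc : IsCompact (closure U)) (hV : IsOpen V) (hUV : closure U ⊆ V)
    (h : ∫⁻ z in U ×ˢ Vᶜ,
      edist z.1 z.2 ^ (-p₁) * ENNReal.ofReal ((u z.1 - u z.2) ^ 2) ∂m.prod m < ⊤) :
    ∫⁻ z in U ×ˢ Vᶜ, ENNReal.ofReal (u z.2 ^ 2) * edist z.1 z.2 ^ (-p₁) ∂m.prod m < ⊤ := by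
  refine lintegral_lt_top_of_le_mul_add (ofNat_ne_top (n := 2))
    (aemeasurable_fst_mul_edist_rpow_neg hu_meas p₁).restrict
    (setLIntegral_prod_mul_edist_rpow_neg_lt_top_of_fst hp₁ le_rfl hw hu_meas huU hU hUc hV hUV)
    h fun z => ?_
  calc ENNReal.ofReal (u z.2 ^ 2) * edist z.1 z.2 ^ (-p₁)
      = edist z.1 z.2 ^ (-p₁) * ENNReal.ofReal ((u z.1 - (u z.1 - u z.2)) ^ 2) := by
        rw [sub_sub_self, mul_comm]
    _ ≤ edist z.1 z.2 ^ (-p₁) *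
        (2 * (ENNReal.ofReal (u z.1 ^ 2) + ENNReal.ofReal ((u z.1 - u z.2) ^ 2))) :=
        mul_le_mul_of_nonneg_left (ofReal_sub_sq_le _ _) zero_le
    _ = 2 * (ENNReal.ofReal (u z.1 ^ 2) * edist z.1 z.2 ^ (-p₁) +
        edist z.1 z.2 ^ (-p₁) * ENNReal.ofReal ((u z.1 - u z.2) ^ 2)) := by ring

theorem lintegral_min_one_mul_lt_top_of_forall_setLIntegral_sq_sub_lt_top [LocallyCompactSpace E]
    [m.IsOpenPosMeasure] {D₁ : ℝ} (hD₁ : 0 < D₁) (hp₁ : 0 ≤ p₁)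
    (hJl : ∀ A : Set (E × E), MeasurableSet A →
      ENNReal.ofReal D₁ * ∫⁻ z in A, edist z.1 z.2 ^ (-p₁) ∂(m.prod m) ≤ J A)
    (hw : ∫⁻ y, min 1 (edist y o ^ (-p₁)) ∂m < ⊤)
    (hu_meas : AEMeasurable (fun x => ENNReal.ofReal (u x ^ 2)) m)
    (hu : ∀ K : Set E, IsCompact K → IntegrableOn (fun x => u x ^ 2) K m)
    (h : ∀ U V : Set E, IsOpen U → IsOpen V → IsCompact (closure U) → closure U ⊆ V →
      IsCompact (closure V) → o ∈ V →
      ∫⁻ z in U ×ˢ Vᶜ, ENNReal.ofReal ((u z.1 - u z.2) ^ 2) ∂J < ⊤) :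
    ∫⁻ y, min 1 (edist y o ^ (-p₁)) * ENNReal.ofReal (u y ^ 2) ∂m < ⊤ := by
  obtain ⟨V, hV, hoV, -, hVc⟩ :=
    exists_open_between_and_isCompact_closure isCompact_singleton isOpen_univ (Set.subset_univ {o})
  obtain ⟨U, hU, hoU, hUV, hUc⟩ :=
    exists_open_between_and_isCompact_closure isCompact_singleton hV hoV
  have hS : MeasurableSet (U ×ˢ Vᶜ) := hU.measurableSet.prod hV.measurableSet.compl
  have hk : Measurable fun z : E × E => edist z.1 z.2 ^ (-p₁) := by fun_prop
  -- Only `u ^ 2`, not `u`, is known to be measurable, so the lower bound on `J` is used through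
  -- a density that has to be a.e. finite.
  have hk_fin : ∀ᵐ z ∂(m.prod m).restrict (U ×ˢ Vᶜ), edist z.1 z.2 ^ (-p₁) < ⊤ := by
    filter_upwards [ae_restrict_mem hS] with z hz
    have hne : z.1 ≠ z.2 := fun heq => hz.2 (heq ▸ hUV (subset_closure hz.1))
    exact (rpow_ne_top_of_ne_zero (edist_pos.2 hne).ne' (edist_ne_top _ _)).lt_top
  have hdiff : ∫⁻ z in U ×ˢ Vᶜ,
      edist z.1 z.2 ^ (-p₁) * ENNReal.ofReal ((u z.1 - u z.2) ^ 2) ∂m.prod m < ⊤ :=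
    lt_top_of_mul_ne_top_right ((mul_setLIntegral_mul_le_setLIntegral hk hJl hS hk_fin _).trans_lt
      (h U V hU hV hUc hUV hVc (hoV rfl))).ne (ofReal_pos.2 hD₁).ne'
  have hfar := setLIntegral_prod_sq_snd_lt_top_of_sq_sub hp₁ hw hu_meas (hu _ hUc).lintegral_lt_top
    hU hUc hV hUV hdiff
  have hnear : ∫⁻ y in V, min 1 (edist y o ^ (-p₁)) * ENNReal.ofReal (u y ^ 2) ∂m < ⊤ :=
    calc ∫⁻ y in V, min 1 (edist y o ^ (-p₁)) * ENNReal.ofReal (u y ^ 2) ∂m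
        ≤ ∫⁻ y in closure V, ENNReal.ofReal (u y ^ 2) ∂m :=
          (lintegral_mono fun y => mul_le_of_le_one_left zero_le (min_le_left _ _)).trans
            (lintegral_mono_set subset_closure)
      _ < ⊤ := (hu _ hVc).lintegral_lt_top
  rw [← lintegral_add_compl _ hV.measurableSet]
  exact add_lt_top.2 ⟨hnear, setLIntegral_min_one_mul_lt_top_of_setLIntegral_prod_lt_top hp₁
    hu_meas (hUc.isBounded.subset subset_closure) hU.measurableSet hV.measurableSet.compl
    (hU.measure_ne_zero m ⟨o, hoU rfl⟩) hfar⟩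

end JumpKernel

theorem stmt_6_general {E : Type*} [MetricSpace E] [LocallyCompactSpace E]
    [TopologicalSpace.SeparableSpace E] [MeasurableSpace E] [BorelSpace E]
    (m : Measure E) [m.Regular] [m.IsOpenPosMeasure]
    (o : E) (J : Measure (E × E))
    (D₁ D₂ p₁ p₂ : ℝ) (hD₁ : 0 < D₁) (hp₁ : 0 < p₁) (hp₁₂ : p₁ ≤ p₂)
    (hJl : ∀ A : Set (E × E), MeasurableSet A →
      ENNReal.ofReal D₁ * ∫⁻ z in A, edist z.1 z.2 ^ (-p₁) ∂(m.prod m) ≤ J A)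
    (hJu : ∀ A : Set (E × E), MeasurableSet A →
      J A ≤ ENNReal.ofReal D₂ * ∫⁻ z in A, edist z.1 z.2 ^ (-p₂) ∂(m.prod m))
    (hw : ∫⁻ y, min 1 (edist y o ^ (-p₁)) ∂m < ⊤)
    (u : E → ℝ) (hu : ∀ K : Set E, IsCompact K → IntegrableOn (fun x => u x ^ 2) K m) :
    (∫⁻ y, min 1 (edist y o ^ (-p₁)) * ENNReal.ofReal (u y ^ 2) ∂m < ⊤) ↔
    (∀ U V : Set E, IsOpen U → IsOpen V → IsCompact (closure U) → closure U ⊆ V →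
      IsCompact (closure V) → o ∈ V →
      ∫⁻ z in U ×ˢ Vᶜ, ENNReal.ofReal ((u z.1 - u z.2) ^ 2) ∂J < ⊤) := by
  have hu_meas : AEMeasurable (fun x => ENNReal.ofReal (u x ^ 2)) m :=
    (locallyIntegrable_iff.2 hu).aestronglyMeasurable.aemeasurable.ennreal_ofReal
  exact ⟨fun h _ _ hU hV hUc hUV _ _ =>
      setLIntegral_sq_sub_lt_top_of_lintegral_min_one_mul_lt_top hp₁.le hp₁₂ hJu hw hu_meas hu h
        hU hV hUc hUV,
    lintegral_min_one_mul_lt_top_of_forall_setLIntegral_sq_sub_lt_top hD₁ hp₁.le hJl hw hu_meas hu⟩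

/-- Let `E` be a locally compact separable metric space, `m` a Radon
measure with full support, `o ∈ E`, and `J` a Borel measure on `E × E` with
`D₁ ∫_A ρ(x,y)^{−p₁} d(m×m) ≤ J(A) ≤ D₂ ∫_A ρ(x,y)^{−p₂} d(m×m)` for all Borel `A`,
where `D₁, D₂ > 0`, `0 < p₁ ≤ p₂ < ∞`. Write `w_p(y) = min(1, ρ(y,o)^{−p})` (value `1`
at `y = o`). Assume `w_{p₁} ∈ L¹(E;m)` and let `u` be locally `m`-square-integrable. Then
`w_{p₁}·|u|² ∈ L¹(E;m)` iff for all open `U ⋐ V` with `closure V` compact and `o ∈ V`,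
`∫_{U × (E∖V)} |u(x) − u(y)|² dJ < ∞`. -/
theorem stmt_6 {E : Type*} [MetricSpace E] [LocallyCompactSpace E]
    [TopologicalSpace.SeparableSpace E] [MeasurableSpace E] [BorelSpace E]
    (m : Measure E) [m.Regular] [m.IsOpenPosMeasure]
    (o : E) (J : Measure (E × E))
    (D₁ D₂ p₁ p₂ : ℝ) (hD₁ : 0 < D₁) (hD₂ : 0 < D₂) (hp₁ : 0 < p₁) (hp₁₂ : p₁ ≤ p₂)
    (hJl : ∀ A : Set (E × E), MeasurableSet A →
      ENNReal.ofReal D₁ * ∫⁻ z in A, edist z.1 z.2 ^ (-p₁) ∂(m.prod m) ≤ J A)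
    (hJu : ∀ A : Set (E × E), MeasurableSet A →
      J A ≤ ENNReal.ofReal D₂ * ∫⁻ z in A, edist z.1 z.2 ^ (-p₂) ∂(m.prod m))
    (hw : ∫⁻ y, min 1 (edist y o ^ (-p₁)) ∂m < ⊤)
    (u : E → ℝ) (hu : ∀ K : Set E, IsCompact K → IntegrableOn (fun x => u x ^ 2) K m) :
    (∫⁻ y, min 1 (edist y o ^ (-p₁)) * ENNReal.ofReal (u y ^ 2) ∂m < ⊤) ↔
    (∀ U V : Set E, IsOpen U → IsOpen V → IsCompact (closure U) → closure U ⊆ V →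
      IsCompact (closure V) → o ∈ V →
      ∫⁻ z in U ×ˢ Vᶜ, ENNReal.ofReal ((u z.1 - u z.2) ^ 2) ∂J < ⊤) :=
  stmt_6_general m o J D₁ D₂ p₁ p₂ hD₁ hp₁ hp₁₂ hJl hJu hw u hu
end

section
/- Let u : E → ℝ be locally integrable with respect to m (integrable on every compact set). Then the following are equivalent: (1) w_{p₁} · |u| ∈ L¹(E; m); (2) for all open sets U, V with U ⋐ V, the closure of V compact, and o ∈ V, one has ∫_{U × (E∖V)} |u(y)| dJ(x,y) < ∞. -/
/-!
For `x ∈ U` and `y ∉ V` the distances `ρ(x, y)` and `ρ(y, o)` are bounded below by some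
`δ > 0` and comparable up to a constant factor, because `closure U ∪ {o}` is a compact subset of
`V`. Hence on `U × Vᶜ` we have `ρ(x, y)^{-p₂} ≤ C w_{p₁}(y)` and `w_{p₁}(y) ≤ C ρ(x, y)^{-p₁}`,
while by Tonelli `∫_{U × Vᶜ} w_{p₁}(y) |u(y)| d(m × m) = m(U) ∫_{Vᶜ} w_{p₁} |u| dm`. Choosing
`o ∈ U` makes `m(U) > 0`, and the remaining integral over `V` is finite by local integrability.
-/

open MeasureTheory ENNReal

namespace ENNReal

lemma rpow_neg_eq_inv_rpow (x : ℝ≥0∞) (p : ℝ) : x ^ (-p) = x⁻¹ ^ p := by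
  rw [rpow_neg, inv_rpow]

lemma rpow_neg_le_rpow_neg {x y : ℝ≥0∞} {p : ℝ} (hp : 0 ≤ p) (h : x ≤ y) :
    y ^ (-p) ≤ x ^ (-p) := by
  simp only [rpow_neg_eq_inv_rpow]
  exact rpow_le_rpow (ENNReal.inv_le_inv' h) hp

lemma rpow_neg_le_mul_rpow_neg {x y M : ℝ≥0∞} {p : ℝ} (hp : 0 ≤ p) (hM₀ : M ≠ 0) (hM : M ≠ ⊤)
    (h : x ≤ M * y) : y ^ (-p) ≤ M ^ p * x ^ (-p) := by
  have hinv : y⁻¹ ≤ M * x⁻¹ := by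
    have : (M⁻¹ * x)⁻¹ = M * x⁻¹ := by
      rw [ENNReal.mul_inv (.inl (ENNReal.inv_ne_zero.2 hM)) (.inl (ENNReal.inv_ne_top.2 hM₀)),
        inv_inv]
    rw [← this, ENNReal.inv_le_inv]
    exact (ENNReal.inv_mul_le_iff hM₀ hM).2 h
  simp only [rpow_neg_eq_inv_rpow]
  rw [← mul_rpow_of_nonneg _ _ hp]
  exact rpow_le_rpow hinv hp

lemma rpow_neg_le_rpow_neg_mul_min_one {a δ : ℝ≥0∞} {p : ℝ} (hp : 0 ≤ p) (hδa : δ ≤ a)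
    (hδ : δ ≤ 1) : a ^ (-p) ≤ δ ^ (-p) * min 1 (a ^ (-p)) := by
  rcases le_total 1 (a ^ (-p)) with h | h
  · rw [min_eq_left h, mul_one]
    exact rpow_neg_le_rpow_neg hp hδa
  · rw [min_eq_right h]
    exact le_mul_of_one_le_left' (by simpa using rpow_neg_le_rpow_neg hp hδ)

lemma le_one_add_div_mul {s t R δ : ℝ≥0∞} (hδ₀ : δ ≠ 0) (hδ : δ ≠ ⊤) (hδt : δ ≤ t)
    (h : s ≤ t + R) : s ≤ (1 + R / δ) * t :=
  calc s ≤ t + R / δ * δ := by rwa [ENNReal.div_mul_cancel hδ₀ hδ]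
    _ ≤ t + R / δ * t := by gcongr
    _ = (1 + R / δ) * t := by ring

end ENNReal

noncomputable def tailWeight {E : Type*} [PseudoEMetricSpace E] (p : ℝ) (o y : E) : ℝ≥0∞ :=
  min 1 (edist y o ^ (-p))

section Geometry

variable {E : Type*} [PseudoMetricSpace E] {U V : Set E} {o : E}

lemma exists_edist_comparison (hUc : IsCompact (closure U)) (hV : IsOpen V)
    (hUV : closure U ⊆ V) (hoV : o ∈ V) :
    ∃ δ M : ℝ≥0∞, δ ≠ 0 ∧ δ ≤ 1 ∧ M ≠ 0 ∧ M ≠ ⊤ ∧ ∀ x ∈ U, ∀ y ∉ V,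
      δ ≤ edist x y ∧ δ ≤ edist y o ∧ edist x y ≤ M * edist y o ∧
        edist y o ≤ M * edist x y := by
  set K := insert o (closure U)
  have hKc : IsCompact K := hUc.insert o
  obtain ⟨δ₀, hδ₀, hKV⟩ := hKc.exists_thickening_subset_open hV (Set.insert_subset hoV hUV)
  obtain ⟨R, hR⟩ := hKc.isBounded.subset_closedBall o
  set δ := min (ENNReal.ofReal δ₀) 1
  have hδ₀' : δ ≠ 0 := (lt_min (ofReal_pos.2 hδ₀) one_pos).ne'
  have hδ : δ ≠ ⊤ := (min_le_right _ _).trans_lt one_lt_top |>.ne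
  have hδK : ∀ k ∈ K, ∀ y ∉ V, δ ≤ edist k y := fun k hk y hy =>
    calc δ ≤ ENNReal.ofReal δ₀ := min_le_left _ _
      _ ≤ Metric.infEDist y K :=
        not_lt.1 fun h => hy (hKV (Metric.mem_thickening_iff_infEDist_lt.2 h))
      _ ≤ edist k y := edist_comm k y ▸ Metric.infEDist_le_edist_of_mem hk
  have hRK : ∀ x ∈ U, edist x o ≤ ENNReal.ofReal R := fun x hx => by
    rw [edist_dist]
    exact ofReal_le_ofReal (hR (Set.mem_insert_of_mem _ (subset_closure hx)))
  refine ⟨δ, 1 + ENNReal.ofReal R / δ, hδ₀', min_le_right _ _, by simp,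
    add_ne_top.2 ⟨one_ne_top, (div_lt_top ofReal_ne_top hδ₀').ne⟩, fun x hx y hy => ?_⟩
  have hδxy := hδK x (Set.mem_insert_of_mem _ (subset_closure hx)) y hy
  have hδyo := edist_comm o y ▸ hδK o (Set.mem_insert o _) y hy
  refine ⟨hδxy, hδyo, le_one_add_div_mul hδ₀' hδ hδyo ?_, le_one_add_div_mul hδ₀' hδ hδxy ?_⟩
  · calc edist x y ≤ edist y o + edist x o := by
          simpa only [edist_comm o y, add_comm] using edist_triangle x o y
      _ ≤ edist y o + ENNReal.ofReal R := by gcongr; exact hRK x hx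
  · calc edist y o ≤ edist x y + edist x o := by
          simpa only [edist_comm y x] using edist_triangle y x o
      _ ≤ edist x y + ENNReal.ofReal R := by gcongr; exact hRK x hx

lemma exists_rpow_neg_edist_le_mul_tailWeight {p q : ℝ} (hp : 0 ≤ p) (hpq : p ≤ q)
    (hUc : IsCompact (closure U)) (hV : IsOpen V) (hUV : closure U ⊆ V) (hoV : o ∈ V) :
    ∃ C ≠ ⊤, ∀ x ∈ U, ∀ y ∉ V, edist x y ^ (-q) ≤ C * tailWeight p o y := by
  obtain ⟨δ, M, hδ₀, hδ₁, hM₀, hM, h⟩ := exists_edist_comparison hUc hV hUV hoV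
  have hδ : δ ≠ ⊤ := ne_top_of_le_ne_top one_ne_top hδ₁
  refine ⟨δ ^ (-(q - p)) * M ^ p * δ ^ (-p), by
    apply_rules [mul_ne_top, rpow_ne_top_of_nonneg' (pos_iff_ne_zero.2 hδ₀) hδ,
      rpow_ne_top_of_nonneg hp], fun x hx y hy => ?_⟩
  obtain ⟨hδxy, hδyo, -, hyo⟩ := h x hx y hy
  have hxy₀ : edist x y ≠ 0 := (pos_iff_ne_zero.2 hδ₀ |>.trans_le hδxy).ne'
  calc edist x y ^ (-q) = edist x y ^ (-(q - p)) * edist x y ^ (-p) := by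
        rw [← rpow_add _ _ hxy₀ (edist_ne_top x y)]; ring_nf
    _ ≤ δ ^ (-(q - p)) * (M ^ p * edist y o ^ (-p)) :=
        mul_le_mul' (rpow_neg_le_rpow_neg (by linarith) hδxy)
          (rpow_neg_le_mul_rpow_neg hp hM₀ hM hyo)
    _ ≤ δ ^ (-(q - p)) * (M ^ p * (δ ^ (-p) * tailWeight p o y)) := by
        gcongr; exact rpow_neg_le_rpow_neg_mul_min_one hp hδyo hδ₁
    _ = δ ^ (-(q - p)) * M ^ p * δ ^ (-p) * tailWeight p o y := by ring

lemma exists_tailWeight_le_mul_rpow_neg_edist {p : ℝ} (hp : 0 ≤ p)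
    (hUc : IsCompact (closure U)) (hV : IsOpen V) (hUV : closure U ⊆ V) (hoV : o ∈ V) :
    ∃ C ≠ ⊤, ∀ x ∈ U, ∀ y ∉ V, tailWeight p o y ≤ C * edist x y ^ (-p) := by
  obtain ⟨δ, M, -, -, hM₀, hM, h⟩ := exists_edist_comparison hUc hV hUV hoV
  exact ⟨M ^ p, rpow_ne_top_of_nonneg hp hM, fun x hx y hy =>
    (min_le_right _ _).trans (rpow_neg_le_mul_rpow_neg hp hM₀ hM (h x hx y hy).2.2.1)⟩

end Geometry

section Measure

variable {α β : Type*} [MeasurableSpace α] [MeasurableSpace β]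

lemma le_smul_withDensity_iff {J μ : Measure α} {c : ℝ≥0∞} {k : α → ℝ≥0∞} :
    J ≤ c • μ.withDensity k ↔ ∀ A, MeasurableSet A → J A ≤ c * ∫⁻ z in A, k z ∂μ := by
  simp only [Measure.le_iff, Measure.smul_apply, smul_eq_mul]
  exact forall₂_congr fun A hA => by rw [withDensity_apply _ hA]

lemma smul_withDensity_le_iff {J μ : Measure α} {c : ℝ≥0∞} {k : α → ℝ≥0∞} :
    c • μ.withDensity k ≤ J ↔ ∀ A, MeasurableSet A → c * ∫⁻ z in A, k z ∂μ ≤ J A := by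
  simp only [Measure.le_iff, Measure.smul_apply, smul_eq_mul]
  exact forall₂_congr fun A hA => by rw [withDensity_apply _ hA]

lemma setLIntegral_smul_withDensity {μ : Measure α} (c : ℝ≥0∞) {k f : α → ℝ≥0∞}
    (hk : Measurable k) (hf : Measurable f) {S : Set α} (hS : MeasurableSet S) :
    ∫⁻ z in S, f z ∂(c • μ.withDensity k) = c * ∫⁻ z in S, k z * f z ∂μ := by
  rw [Measure.restrict_smul, lintegral_smul_measure, restrict_withDensity hS,
    lintegral_withDensity_eq_lintegral_mul _ hk hf]
  rfl

lemma setLIntegral_prod_comp_snd (μ : Measure α) (ν : Measure β) [SFinite μ] [SFinite ν]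
    {f : β → ℝ≥0∞} (s : Set α) (t : Set β) (hf : AEMeasurable f (ν.restrict t)) :
    ∫⁻ z in s ×ˢ t, f z.2 ∂μ.prod ν = μ s * ∫⁻ y in t, f y ∂ν := by
  rw [← Measure.prod_restrict]
  simpa using lintegral_prod_mul (μ := μ.restrict s) (f := fun _ => 1) aemeasurable_const hf

end Measure

@[fun_prop]
lemma measurable_tailWeight {E : Type*} [PseudoEMetricSpace E] [MeasurableSpace E]
    [OpensMeasurableSpace E] (p : ℝ) (o : E) : Measurable (tailWeight p o) := by
  unfold tailWeight; fun_prop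

section JumpKernel

variable {E : Type*} [PseudoMetricSpace E] [MeasurableSpace E] [BorelSpace E]
  [SecondCountableTopology E] {m : Measure E} [SFinite m] {J : Measure (E × E)} {o : E}
  {g : E → ℝ≥0∞} {c : ℝ≥0∞} {U V : Set E}

lemma setLIntegral_prod_compl_lt_top_of_lintegral_tailWeight_lt_top
    [IsFiniteMeasureOnCompacts m] (hc : c ≠ ⊤) {p q : ℝ} (hp : 0 ≤ p) (hpq : p ≤ q)
    (hJ : J ≤ c • (m.prod m).withDensity fun z => edist z.1 z.2 ^ (-q))
    (hg : Measurable g) (hfin : ∫⁻ y, tailWeight p o y * g y ∂m < ⊤)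
    (hU : MeasurableSet U) (hV : IsOpen V) (hUc : IsCompact (closure U)) (hUV : closure U ⊆ V)
    (hoV : o ∈ V) :
    ∫⁻ z in U ×ˢ Vᶜ, g z.2 ∂J < ⊤ := by
  obtain ⟨C, hC, hCk⟩ := exists_rpow_neg_edist_le_mul_tailWeight hp hpq hUc hV hUV hoV
  have hmU : m U < ⊤ := (measure_mono subset_closure).trans_lt hUc.measure_lt_top
  calc ∫⁻ z in U ×ˢ Vᶜ, g z.2 ∂J
      ≤ ∫⁻ z in U ×ˢ Vᶜ, g z.2 ∂(c • (m.prod m).withDensity fun z => edist z.1 z.2 ^ (-q)) :=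
        lintegral_mono' (Measure.restrict_mono subset_rfl hJ) le_rfl
    _ = c * ∫⁻ z in U ×ˢ Vᶜ, edist z.1 z.2 ^ (-q) * g z.2 ∂m.prod m :=
        setLIntegral_smul_withDensity c (by fun_prop) (by fun_prop)
          (hU.prod hV.measurableSet.compl)
    _ ≤ c * ∫⁻ z in U ×ˢ Vᶜ, C * (tailWeight p o z.2 * g z.2) ∂m.prod m := by
        gcongr c * ?_
        refine setLIntegral_mono (by fun_prop) fun z ⟨hz₁, hz₂⟩ => ?_
        rw [← mul_assoc]
        exact mul_le_mul_left (hCk z.1 hz₁ z.2 hz₂) _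
    _ = c * (C * (m U * ∫⁻ y in Vᶜ, tailWeight p o y * g y ∂m)) := by
        rw [lintegral_const_mul _ (by fun_prop),
          setLIntegral_prod_comp_snd (f := fun y => tailWeight p o y * g y) _ _ _ _ (by fun_prop)]
    _ < ⊤ := mul_lt_top hc.lt_top <| mul_lt_top hC.lt_top <| mul_lt_top hmU <|
        (setLIntegral_le_lintegral _ _).trans_lt hfin

lemma lintegral_tailWeight_lt_top_of_setLIntegral_prod_compl_lt_top [m.IsOpenPosMeasure]
    (hc : c ≠ 0) {p : ℝ} (hp : 0 ≤ p)
    (hJ : c • (m.prod m).withDensity (fun z => edist z.1 z.2 ^ (-p)) ≤ J)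
    (hg : Measurable g) (hU : IsOpen U) (hoU : o ∈ U) (hV : IsOpen V)
    (hUc : IsCompact (closure U)) (hUV : closure U ⊆ V) (hgV : ∫⁻ y in V, g y ∂m < ⊤)
    (hfin : ∫⁻ z in U ×ˢ Vᶜ, g z.2 ∂J < ⊤) :
    ∫⁻ y, tailWeight p o y * g y ∂m < ⊤ := by
  obtain ⟨C, hC, hCk⟩ :=
    exists_tailWeight_le_mul_rpow_neg_edist hp hUc hV hUV (hUV (subset_closure hoU))
  have hkernel : c * ∫⁻ z in U ×ˢ Vᶜ, edist z.1 z.2 ^ (-p) * g z.2 ∂m.prod m < ⊤ := by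
    rw [← setLIntegral_smul_withDensity c (by fun_prop) (by fun_prop)
      (hU.measurableSet.prod hV.measurableSet.compl)]
    exact (lintegral_mono' (Measure.restrict_mono subset_rfl hJ) le_rfl).trans_lt hfin
  have htail : m U * ∫⁻ y in Vᶜ, tailWeight p o y * g y ∂m < ⊤ :=
    calc m U * ∫⁻ y in Vᶜ, tailWeight p o y * g y ∂m
        = ∫⁻ z in U ×ˢ Vᶜ, tailWeight p o z.2 * g z.2 ∂m.prod m :=
          (setLIntegral_prod_comp_snd _ _ _ _ (by fun_prop)).symm
      _ ≤ ∫⁻ z in U ×ˢ Vᶜ, C * (edist z.1 z.2 ^ (-p) * g z.2) ∂m.prod m :=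
          setLIntegral_mono (by fun_prop) fun z ⟨hz₁, hz₂⟩ => by
            rw [← mul_assoc]; exact mul_le_mul_left (hCk z.1 hz₁ z.2 hz₂) _
      _ = C * ∫⁻ z in U ×ˢ Vᶜ, edist z.1 z.2 ^ (-p) * g z.2 ∂m.prod m :=
          lintegral_const_mul _ (by fun_prop)
      _ < ⊤ := mul_lt_top hC.lt_top (lt_top_of_mul_ne_top_right hkernel.ne hc)
  rw [← lintegral_add_compl _ hV.measurableSet]
  refine add_lt_top.2 ⟨?_, lt_top_of_mul_ne_top_right htail.ne (hU.measure_ne_zero m ⟨o, hoU⟩)⟩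
  exact (setLIntegral_mono hg fun y _ => mul_le_of_le_one_left' (min_le_left _ _)).trans_lt hgV

end JumpKernel

theorem stmt_7_general {E : Type*} [MetricSpace E] [LocallyCompactSpace E]
    [TopologicalSpace.SeparableSpace E] [MeasurableSpace E] [BorelSpace E]
    (m : Measure E) [m.Regular] [m.IsOpenPosMeasure]
    (o : E) (J : Measure (E × E))
    (D₁ D₂ p₁ p₂ : ℝ) (hD₁ : 0 < D₁) (hp₁ : 0 < p₁) (hp₁₂ : p₁ ≤ p₂)
    (hJl : ∀ A : Set (E × E), MeasurableSet A →
      ENNReal.ofReal D₁ * ∫⁻ z in A, edist z.1 z.2 ^ (-p₁) ∂(m.prod m) ≤ J A)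
    (hJu : ∀ A : Set (E × E), MeasurableSet A →
      J A ≤ ENNReal.ofReal D₂ * ∫⁻ z in A, edist z.1 z.2 ^ (-p₂) ∂(m.prod m))
    (u : E → ℝ) (hu : ∀ K : Set E, IsCompact K → IntegrableOn u K m) :
    (∫⁻ y, min 1 (edist y o ^ (-p₁)) * ENNReal.ofReal |u y| ∂m < ⊤) ↔
    (∀ U V : Set E, IsOpen U → IsOpen V → IsCompact (closure U) → closure U ⊆ V →
      IsCompact (closure V) → o ∈ V →
      ∫⁻ z in U ×ˢ Vᶜ, ENNReal.ofReal |u z.2| ∂J < ⊤) := by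
  have : SecondCountableTopology E := UniformSpace.secondCountable_of_separable E
  have hJle := le_smul_withDensity_iff.2 hJu
  -- Since `J ≪ m.prod m`, one measurable version of `‖u‖ₑ` serves on both sides.
  obtain ⟨v, hv, huv⟩ : ∃ v, Measurable v ∧ (fun y => ‖u y‖ₑ) =ᵐ[m] v :=
    have h := (locallyIntegrable_iff.2 hu).aestronglyMeasurable.enorm
    ⟨h.mk _, h.measurable_mk, h.ae_eq_mk⟩
  have huvJ : (fun z : E × E => ‖u z.2‖ₑ) =ᵐ[J] fun z => v z.2 :=
    ((Measure.absolutelyContinuous_of_le_smul hJle).trans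
      (withDensity_absolutelyContinuous _ _)).ae_le
        (Measure.quasiMeasurePreserving_snd.ae_eq_comp huv)
  simp only [← Real.enorm_eq_ofReal_abs, fun S => lintegral_congr_ae (ae_restrict_of_ae huvJ)]
  have hw : ∫⁻ y, min 1 (edist y o ^ (-p₁)) * ‖u y‖ₑ ∂m = ∫⁻ y, tailWeight p₁ o y * v y ∂m :=
    lintegral_congr_ae (huv.mono fun y hy => congrArg (tailWeight p₁ o y * ·) hy)
  rw [hw]
  constructor
  · intro hfin U V hU hV hUc hUV _ hoV
    exact setLIntegral_prod_compl_lt_top_of_lintegral_tailWeight_lt_top ofReal_ne_top hp₁.le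
      hp₁₂ hJle hv hfin hU.measurableSet hV hUc hUV hoV
  · intro h
    obtain ⟨U, hU, hoU, -, hUc⟩ := exists_open_between_and_isCompact_closure isCompact_singleton
      isOpen_univ (Set.subset_univ {o})
    obtain ⟨V, hV, hUV, -, hVc⟩ := exists_open_between_and_isCompact_closure hUc isOpen_univ
      (Set.subset_univ _)
    have hgV : ∫⁻ y in V, v y ∂m < ⊤ := by
      rw [← lintegral_congr_ae (ae_restrict_of_ae huv)]
      exact ((hu _ hVc).mono_set subset_closure).hasFiniteIntegral
    exact lintegral_tailWeight_lt_top_of_setLIntegral_prod_compl_lt_top (ofReal_pos.2 hD₁).ne'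
      hp₁.le (smul_withDensity_le_iff.2 hJl) hv hU (hoU rfl) hV hUc hUV hgV
      (h U V hU hV hUc hUV hVc (hUV (subset_closure (hoU rfl))))

/-- Let `E` be a locally compact separable metric space, `m` a Radon
measure with full support, `o ∈ E`, and `J` a Borel measure on `E × E` with
`D₁ ∫_A ρ(x,y)^{−p₁} d(m×m) ≤ J(A) ≤ D₂ ∫_A ρ(x,y)^{−p₂} d(m×m)` for all Borel `A`,
where `D₁, D₂ > 0`, `0 < p₁ ≤ p₂ < ∞`. Write `w_p(y) = min(1, ρ(y,o)^{−p})` (value `1`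
at `y = o`). Let `u` be locally `m`-integrable. Then
`w_{p₁}·|u| ∈ L¹(E;m)` iff for all open `U ⋐ V` with `closure V` compact and `o ∈ V`,
`∫_{U × (E∖V)} |u(y)| dJ < ∞`. -/
theorem stmt_7 {E : Type*} [MetricSpace E] [LocallyCompactSpace E]
    [TopologicalSpace.SeparableSpace E] [MeasurableSpace E] [BorelSpace E]
    (m : Measure E) [m.Regular] [m.IsOpenPosMeasure]
    (o : E) (J : Measure (E × E))
    (D₁ D₂ p₁ p₂ : ℝ) (hD₁ : 0 < D₁) (hD₂ : 0 < D₂) (hp₁ : 0 < p₁) (hp₁₂ : p₁ ≤ p₂)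
    (hJl : ∀ A : Set (E × E), MeasurableSet A →
      ENNReal.ofReal D₁ * ∫⁻ z in A, edist z.1 z.2 ^ (-p₁) ∂(m.prod m) ≤ J A)
    (hJu : ∀ A : Set (E × E), MeasurableSet A →
      J A ≤ ENNReal.ofReal D₂ * ∫⁻ z in A, edist z.1 z.2 ^ (-p₂) ∂(m.prod m))
    (u : E → ℝ) (hu : ∀ K : Set E, IsCompact K → IntegrableOn u K m) :
    (∫⁻ y, min 1 (edist y o ^ (-p₁)) * ENNReal.ofReal |u y| ∂m < ⊤) ↔
    (∀ U V : Set E, IsOpen U → IsOpen V → IsCompact (closure U) → closure U ⊆ V →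
      IsCompact (closure V) → o ∈ V →
      ∫⁻ z in U ×ˢ Vᶜ, ENNReal.ofReal |u z.2| ∂J < ⊤) :=
  stmt_7_general m o J D₁ D₂ p₁ p₂ hD₁ hp₁ hp₁₂ hJl hJu u hu
end

section
/- Let m ≥ 0 and let U, V ⊆ ℝᵈ satisfy sup_{z∈U} ‖z‖ < ∞ and inf{‖x − y‖ : x ∈ U, y ∈ ℝᵈ∖V} > 0. Then there exists C₂ > 0 such that for every x ∈ U and every y ∈ ℝᵈ∖V: Ψ(m^{1/α}‖x − y‖) · max(1, ‖y‖^{d+α}) ≤ C₂ · Ψ(m^{1/α}‖y‖) · ‖x − y‖^{d+α} (equivalently, Ψ(m^{1/α}‖x−y‖)/‖x−y‖^{d+α} ≤ C₂ Ψ(m^{1/α}‖y‖) min(1, ‖y‖^{−(d+α)}) whenever y ≠ 0). -/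
/-- `I(r) = ∫₀^∞ s^{(d+α)/2 − 1} e^{−s/4 − r²/s} ds`. -/
noncomputable def Ifun (d : ℕ) (α : ℝ) (r : ℝ) : ℝ :=
  ∫ s in Set.Ioi (0 : ℝ), s ^ (((d : ℝ) + α) / 2 - 1) * Real.exp (-(s / 4) - r ^ 2 / s)

/-- `Ψ(r) = I(r)/I(0)`. -/
noncomputable def Psi (d : ℕ) (α : ℝ) (r : ℝ) : ℝ := Ifun d α r / Ifun d α 0

/-!
`Ψ` is a normalisation of `I = besselIntegral ((d + α) / 2)`, which is positive, even and
nonincreasing on `[0, ∞)`. The heart of the matter is the Harnack-type bound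
`I(r) ≤ K · I(r + c)`. The inversion `s ↦ 4r²/s` preserves `s/4 + r²/s` and shows that at least
half of `I(r)` comes from `s ≥ 2r`; there, if `r ≥ c`, replacing `r` by `r + c` in the
integrand costs at most a factor `e^{3c/2}`. For `r < c` monotonicity suffices.
Since `‖y‖ ≤ ‖x − y‖ + R` and `‖x − y‖ ≥ δ`, the theorem follows with
`C₂ = K · ((1 + R)/δ + 1)^{d+α}` and `c = |m^{1/α}| R`.
-/

open MeasureTheory Real Set

noncomputable def besselIntegrand (b r s : ℝ) : ℝ := s ^ (b - 1) * exp (-(s / 4) - r ^ 2 / s)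

/-- For `r > 0` this is `2 (2r)^b K_b(r)`, with `K_b` the modified Bessel function of the
second kind; `Ifun d α` is `besselIntegral ((d + α) / 2)` by definition. -/
noncomputable def besselIntegral (b r : ℝ) : ℝ := ∫ s in Ioi 0, besselIntegrand b r s

section besselIntegral

variable {b : ℝ}

lemma besselIntegrand_nonneg (b r : ℝ) {s : ℝ} (hs : 0 ≤ s) : 0 ≤ besselIntegrand b r s := by
  unfold besselIntegrand; positivity

lemma integrableOn_besselIntegrand (hb : 0 < b) (r : ℝ) :
    IntegrableOn (besselIntegrand b r) (Ioi 0) := by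
  have hdom : IntegrableOn (fun s : ℝ => s ^ (b - 1) * exp (-(s / 4))) (Ioi 0) := by
    refine (integrableOn_rpow_mul_exp_neg_mul_rpow (s := b - 1) (p := 1) (b := 1 / 4)
      (by linarith) zero_lt_one (by norm_num)).congr_fun (fun s _ => ?_) measurableSet_Ioi
    simp only [rpow_one]; ring_nf
  refine hdom.mono' (by unfold besselIntegrand; fun_prop) ?_
  filter_upwards [ae_restrict_mem measurableSet_Ioi] with s (hs : 0 < s)
  rw [Real.norm_of_nonneg (besselIntegrand_nonneg b r hs.le), besselIntegrand]
  gcongr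
  linarith [div_nonneg (sq_nonneg r) hs.le]

lemma besselIntegral_abs (b r : ℝ) : besselIntegral b |r| = besselIntegral b r := by
  simp only [besselIntegral, besselIntegrand, sq_abs]

lemma besselIntegral_pos (hb : 0 < b) (r : ℝ) : 0 < besselIntegral b r := by
  refine (setIntegral_pos_iff_support_of_nonneg_ae ?_ (integrableOn_besselIntegrand hb r)).mpr ?_
  · filter_upwards [ae_restrict_mem measurableSet_Ioi] with s (hs : 0 < s)
    exact besselIntegrand_nonneg b r hs.le
  · have hsupp : Ioi 0 ⊆ Function.support (besselIntegrand b r) ∩ Ioi 0 := fun s (hs : 0 < s) =>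
      ⟨(by unfold besselIntegrand; positivity : 0 < besselIntegrand b r s).ne', hs⟩
    exact (measure_mono hsupp).trans_lt' (by simp)

lemma besselIntegral_antitoneOn (hb : 0 < b) : AntitoneOn (besselIntegral b) (Ici 0) := by
  intro r hr r' _ hrr'
  refine setIntegral_mono_on (integrableOn_besselIntegrand hb r')
    (integrableOn_besselIntegrand hb r) measurableSet_Ioi fun s (hs : 0 < s) => ?_
  unfold besselIntegrand
  have : r ^ 2 ≤ r' ^ 2 := pow_le_pow_left₀ hr hrr' 2
  gcongr

/-- The inversion `s ↦ 4r²/s` fixes `s/4 + r²/s`; its Jacobian weight on `(0, 2r)` is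
`(2r/u)^{2b} ≥ 1`. -/
lemma besselIntegrand_le_inversion (hb : 0 < b) {r u : ℝ} (hu : 0 < u) (hur : u < 2 * r) :
    besselIntegrand b r u ≤ |-(4 * r ^ 2) / u ^ 2| * besselIntegrand b r (4 * r ^ 2 / u) := by
  have hr : 0 < r := by linarith
  have hexp : -(4 * r ^ 2 / u / 4) - r ^ 2 / (4 * r ^ 2 / u) = -(u / 4) - r ^ 2 / u := by
    field_simp; ring
  set w := 4 * r ^ 2 / u ^ 2 with hw
  have hw1 : 1 ≤ w := by
    rw [hw, le_div_iff₀ (by positivity)]; nlinarith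
  have hwu : 4 * r ^ 2 / u = w * u := by rw [hw]; field_simp
  unfold besselIntegrand
  rw [hexp, neg_div, abs_neg, abs_of_nonneg (by positivity), ← hw, hwu,
    mul_rpow (by positivity) hu.le]
  calc u ^ (b - 1) * exp (-(u / 4) - r ^ 2 / u)
      = 1 * (u ^ (b - 1) * exp (-(u / 4) - r ^ 2 / u)) := (one_mul _).symm
    _ ≤ w ^ b * (u ^ (b - 1) * exp (-(u / 4) - r ^ 2 / u)) := by
        gcongr; exact one_le_rpow hw1 hb.le
    _ = w * (w ^ (b - 1) * u ^ (b - 1) * exp (-(u / 4) - r ^ 2 / u)) := by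
        have hw0 : w ≠ 0 := by positivity
        rw [rpow_sub_one hw0]; field_simp

lemma image_inversion_Ioo {r : ℝ} (hr : 0 < r) :
    (fun u : ℝ => 4 * r ^ 2 / u) '' Ioo 0 (2 * r) = Ioi (2 * r) := by
  ext y
  simp only [mem_image, mem_Ioo, mem_Ioi]
  constructor
  · rintro ⟨u, ⟨hu0, hu2⟩, rfl⟩
    calc 2 * r = 4 * r ^ 2 / (2 * r) := by field_simp; ring
      _ < 4 * r ^ 2 / u := div_lt_div_of_pos_left (by positivity) hu0 hu2
  · intro hy
    have hy0 : 0 < y := lt_trans (by positivity) hy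
    refine ⟨4 * r ^ 2 / y, ⟨by positivity, ?_⟩, by field_simp⟩
    rw [div_lt_iff₀ hy0]; nlinarith

lemma setIntegral_Ioo_besselIntegrand_le_Ioi (hb : 0 < b) {r : ℝ} (hr : 0 < r) :
    ∫ s in Ioo 0 (2 * r), besselIntegrand b r s ≤ ∫ s in Ioi (2 * r), besselIntegrand b r s := by
  have hderiv : ∀ u ∈ Ioo (0 : ℝ) (2 * r),
      HasDerivWithinAt (fun u : ℝ => 4 * r ^ 2 / u) (-(4 * r ^ 2) / u ^ 2) (Ioo 0 (2 * r)) u :=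
    fun u hu => by
      simpa [div_eq_mul_inv, neg_div] using
        ((hasDerivAt_inv hu.1.ne').const_mul (4 * r ^ 2)).hasDerivWithinAt
  have hinj : InjOn (fun u : ℝ => 4 * r ^ 2 / u) (Ioo 0 (2 * r)) := fun u hu v hv h => by
    have := hu.1.ne'; have := hv.1.ne'
    field_simp at h; exact h.symm
  have hint := (integrableOn_besselIntegrand hb r).mono_set
    (image_inversion_Ioo hr ▸ Ioi_subset_Ioi (by positivity : (0 : ℝ) ≤ 2 * r))
  rw [← image_inversion_Ioo hr,
    integral_image_eq_integral_abs_deriv_smul measurableSet_Ioo hderiv hinj]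
  rw [integrableOn_image_iff_integrableOn_abs_deriv_smul measurableSet_Ioo hderiv hinj] at hint
  exact setIntegral_mono_on ((integrableOn_besselIntegrand hb r).mono_set Ioo_subset_Ioi_self)
    hint measurableSet_Ioo fun u hu => besselIntegrand_le_inversion hb hu.1 hu.2

lemma besselIntegral_le_two_mul_setIntegral_Ioi (hb : 0 < b) {r : ℝ} (hr : 0 < r) :
    besselIntegral b r ≤ 2 * ∫ s in Ioi (2 * r), besselIntegrand b r s := by
  have h2r : (0 : ℝ) < 2 * r := by positivity
  have hsplit : besselIntegral b r = (∫ s in Ioo 0 (2 * r), besselIntegrand b r s)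
      + ∫ s in Ioi (2 * r), besselIntegrand b r s := by
    rw [besselIntegral, ← integral_Ioc_eq_integral_Ioo, ← setIntegral_union
      (Ioc_disjoint_Ioi le_rfl) measurableSet_Ioi
      ((integrableOn_besselIntegrand hb r).mono_set Ioc_subset_Ioi_self)
      ((integrableOn_besselIntegrand hb r).mono_set (Ioi_subset_Ioi h2r.le)),
      Ioc_union_Ioi_eq_Ioi h2r.le]
  linarith [setIntegral_Ioo_besselIntegrand_le_Ioi hb hr]

lemma besselIntegrand_le_exp_mul_add {r c s : ℝ} (hc : 0 ≤ c) (hcr : c ≤ r) (hs : 2 * r ≤ s)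
    (hs0 : 0 < s) :
    besselIntegrand b r s ≤ exp (3 * c / 2) * besselIntegrand b (r + c) s := by
  unfold besselIntegrand
  rw [mul_left_comm, ← exp_add]
  gcongr
  have hnum : (r + c) ^ 2 ≤ r ^ 2 + 3 * c / 2 * s := by nlinarith
  have : (r + c) ^ 2 / s ≤ r ^ 2 / s + 3 * c / 2 := by
    calc (r + c) ^ 2 / s ≤ (r ^ 2 + 3 * c / 2 * s) / s := by gcongr
      _ = r ^ 2 / s + 3 * c / 2 := by field_simp
  linarith

lemma besselIntegral_le_mul_add_of_le (hb : 0 < b) {r c : ℝ} (hr : 0 < r) (hc : 0 ≤ c)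
    (hcr : c ≤ r) :
    besselIntegral b r ≤ 2 * exp (3 * c / 2) * besselIntegral b (r + c) := by
  have h2r : Ioi (2 * r) ⊆ Ioi 0 := Ioi_subset_Ioi (by positivity)
  calc besselIntegral b r ≤ 2 * ∫ s in Ioi (2 * r), besselIntegrand b r s :=
        besselIntegral_le_two_mul_setIntegral_Ioi hb hr
    _ ≤ 2 * ∫ s in Ioi (2 * r), exp (3 * c / 2) * besselIntegrand b (r + c) s := by
        refine mul_le_mul_of_nonneg_left ?_ zero_le_two
        refine setIntegral_mono_on ((integrableOn_besselIntegrand hb r).mono_set h2r)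
          (((integrableOn_besselIntegrand hb (r + c)).mono_set h2r).const_mul _)
          measurableSet_Ioi fun s (hs : 2 * r < s) =>
            besselIntegrand_le_exp_mul_add hc hcr hs.le (by linarith)
    _ ≤ 2 * exp (3 * c / 2) * besselIntegral b (r + c) := by
        rw [integral_const_mul, mul_assoc]
        gcongr
        refine setIntegral_mono_set (integrableOn_besselIntegrand hb _) ?_ h2r.eventuallyLE
        filter_upwards [ae_restrict_mem measurableSet_Ioi] with s (hs : 0 < s)
        exact besselIntegrand_nonneg b _ hs.le

lemma exists_besselIntegral_le_mul_add (hb : 0 < b) {c : ℝ} (hc : 0 ≤ c) :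
    ∃ K > 0, ∀ r ≥ 0, besselIntegral b r ≤ K * besselIntegral b (r + c) := by
  have hI2c := besselIntegral_pos hb (2 * c)
  refine ⟨max (2 * exp (3 * c / 2)) (besselIntegral b 0 / besselIntegral b (2 * c)),
    by positivity, fun r hr => ?_⟩
  rcases le_or_gt r c with hrc | hcr
  · calc besselIntegral b r ≤ besselIntegral b 0 :=
          besselIntegral_antitoneOn hb self_mem_Ici hr hr
      _ = besselIntegral b 0 / besselIntegral b (2 * c) * besselIntegral b (2 * c) := by
          field_simp
      _ ≤ _ := mul_le_mul (le_max_right _ _)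
          (besselIntegral_antitoneOn hb (show 0 ≤ r + c by positivity)
            (show 0 ≤ 2 * c by positivity) (by linarith))
          hI2c.le (by positivity)
  · calc besselIntegral b r ≤ 2 * exp (3 * c / 2) * besselIntegral b (r + c) :=
          besselIntegral_le_mul_add_of_le hb (hc.trans_lt hcr) hc hcr.le
      _ ≤ _ := by gcongr; exacts [(besselIntegral_pos hb _).le, le_max_left _ _]

lemma exists_besselIntegral_le_mul_of_abs_le (hb : 0 < b) {c : ℝ} (hc : 0 ≤ c) :
    ∃ K > 0, ∀ u v, |v| ≤ |u| + c → besselIntegral b u ≤ K * besselIntegral b v := by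
  obtain ⟨K, hK, hshift⟩ := exists_besselIntegral_le_mul_add hb hc
  refine ⟨K, hK, fun u v huv => ?_⟩
  rw [← besselIntegral_abs b u, ← besselIntegral_abs b v]
  calc besselIntegral b |u| ≤ K * besselIntegral b (|u| + c) := hshift _ (abs_nonneg u)
    _ ≤ K * besselIntegral b |v| := by
        gcongr
        exact besselIntegral_antitoneOn hb (abs_nonneg v) (show 0 ≤ |u| + c by positivity) huv

end besselIntegral

lemma Psi_pos {d : ℕ} {α : ℝ} (hα : 0 < α) (r : ℝ) : 0 < Psi d α r :=
  div_pos (besselIntegral_pos (by positivity) r) (besselIntegral_pos (by positivity) 0)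

lemma exists_Psi_le_mul_of_abs_le {d : ℕ} {α c : ℝ} (hα : 0 < α) (hc : 0 ≤ c) :
    ∃ K > 0, ∀ u v, |v| ≤ |u| + c → Psi d α u ≤ K * Psi d α v := by
  have hb : 0 < ((d : ℝ) + α) / 2 := by positivity
  obtain ⟨K, hK, hI⟩ := exists_besselIntegral_le_mul_of_abs_le hb hc
  refine ⟨K, hK, fun u v huv => ?_⟩
  rw [Psi, Psi, ← mul_div_assoc]
  exact div_le_div_of_nonneg_right (hI u v huv) (besselIntegral_pos hb 0).le

theorem stmt_13_general (d : ℕ) (α : ℝ) (hα : 0 < α)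
    (m : ℝ) (U V : Set (EuclideanSpace ℝ (Fin d)))
    (hbdd : ∃ R : ℝ, ∀ z ∈ U, ‖z‖ ≤ R)
    (hsep : ∃ δ : ℝ, 0 < δ ∧ ∀ x ∈ U, ∀ y ∉ V, δ ≤ ‖x - y‖) :
    ∃ C₂ : ℝ, 0 < C₂ ∧ ∀ x ∈ U, ∀ y ∉ V,
      Psi d α (m ^ (1 / α) * ‖x - y‖) * max 1 (‖y‖ ^ ((d : ℝ) + α)) ≤
        C₂ * Psi d α (m ^ (1 / α) * ‖y‖) * ‖x - y‖ ^ ((d : ℝ) + α) := by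
  obtain ⟨R, hR⟩ := hbdd
  obtain ⟨δ, hδ, hsep⟩ := hsep
  set R₀ := max R 0
  set a := m ^ (1 / α)
  set p := (d : ℝ) + α
  set L := (1 + R₀) / δ + 1
  obtain ⟨K, hK, hPsi⟩ := exists_Psi_le_mul_of_abs_le (d := d) hα (by positivity : 0 ≤ |a| * R₀)
  refine ⟨K * L ^ p, by positivity, fun x hx y hy => ?_⟩
  have hy_le : ‖y‖ ≤ ‖x - y‖ + R₀ := by
    linarith [norm_le_norm_add_norm_sub x y, (hR x hx).trans (le_max_left R 0)]
  have hδs : 1 ≤ ‖x - y‖ / δ := (one_le_div hδ).mpr (hsep x hx y hy)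
  have hL : L * ‖x - y‖ = (1 + R₀) * (‖x - y‖ / δ) + ‖x - y‖ := by ring
  have hLs₁ : 1 ≤ L * ‖x - y‖ := by
    rw [hL]; nlinarith [le_max_right R 0, norm_nonneg (x - y)]
  have hLs : ‖y‖ ≤ L * ‖x - y‖ := by
    rw [hL]; nlinarith [le_max_right R 0]
  have hmax : max 1 (‖y‖ ^ p) ≤ L ^ p * ‖x - y‖ ^ p := by
    rw [← mul_rpow (by positivity) (norm_nonneg _)]
    exact max_le (one_le_rpow hLs₁ (by positivity))
      (rpow_le_rpow (norm_nonneg _) hLs (by positivity))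
  have hPsi_xy : Psi d α (a * ‖x - y‖) ≤ K * Psi d α (a * ‖y‖) := by
    refine hPsi _ _ ?_
    simp only [abs_mul, abs_norm]
    nlinarith [abs_nonneg a]
  calc Psi d α (a * ‖x - y‖) * max 1 (‖y‖ ^ p)
      ≤ K * Psi d α (a * ‖y‖) * (L ^ p * ‖x - y‖ ^ p) := by
        gcongr
        exact mul_nonneg hK.le (Psi_pos hα _).le
    _ = K * L ^ p * Psi d α (a * ‖y‖) * ‖x - y‖ ^ p := by ring

/-- Let `m ≥ 0` and let `U, V ⊆ ℝᵈ` satisfy `sup_{z∈U}‖z‖ < ∞` and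
`inf{‖x−y‖ : x ∈ U, y ∈ ℝᵈ∖V} > 0`. Then there is `C₂ > 0` such that for every
`x ∈ U` and `y ∈ ℝᵈ∖V`,
`Ψ(m^{1/α}‖x−y‖)·max(1, ‖y‖^{d+α}) ≤ C₂·Ψ(m^{1/α}‖y‖)·‖x−y‖^{d+α}`. -/
theorem stmt_13 (d : ℕ) (hd : 1 ≤ d) (α : ℝ) (hα : 0 < α) (hα2 : α < 2)
    (m : ℝ) (hm : 0 ≤ m) (U V : Set (EuclideanSpace ℝ (Fin d)))
    (hbdd : ∃ R : ℝ, ∀ z ∈ U, ‖z‖ ≤ R)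
    (hsep : ∃ δ : ℝ, 0 < δ ∧ ∀ x ∈ U, ∀ y ∉ V, δ ≤ ‖x - y‖) :
    ∃ C₂ : ℝ, 0 < C₂ ∧ ∀ x ∈ U, ∀ y ∉ V,
      Psi d α (m ^ (1 / α) * ‖x - y‖) * max 1 (‖y‖ ^ ((d : ℝ) + α)) ≤
        C₂ * Psi d α (m ^ (1 / α) * ‖y‖) * ‖x - y‖ ^ ((d : ℝ) + α) :=
  stmt_13_general d α hα m U V hbdd hsep
end
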